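/- arXiv:1909.13502 — 8 statements merged into one kernel-verified Lean document; each statement's English description precedes it below -/
import Mathlib

section
/- Let w₁, …, wₙ ∈ V ∖ {0}, let λ₁, …, λₙ ∈ eR ∖ {0}, and set w := Σᵢ λᵢ·wᵢ (then w ≠ 0 since q is anisotropic). Then for every y ∈ V ∖ {0} one has CS(w, y) = Σᵢ CS(wᵢ, y)·αᵢ (sum in eR), where αᵢ := e·q(λᵢ·wᵢ)·q(w)⁻¹ ∈ eR satisfies 0 < αᵢ ≤ e for each i. -/
namespace SupertropicalCS

/-- The ray of a vector `x` in an `R`-module `V`: the set of all nonzero vectors `y`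
with `lam • x = mu • y` for some nonzero scalars `lam`, `mu`. -/
def ray (R : Type*) {V : Type*} [CommSemiring R] [AddCommMonoid V] [Module R V]
    (x : V) : Set V :=
  {y | y ≠ 0 ∧ ∃ lam mu : R, lam ≠ 0 ∧ mu ≠ 0 ∧ lam • x = mu • y}

/-- The set of all rays in `V` (the ray space `Ray(V)`). -/
def Rays (R V : Type*) [CommSemiring R] [AddCommMonoid V] [Module R V] : Set (Set V) :=
  {S | ∃ x : V, x ≠ 0 ∧ S = ray R x}

/-- The closed interval `[ray x, ray y]` in the ray space: all rays
`ray (lam • x + mu • y)` with `lam, mu ∈ R` and `lam • x + mu • y ≠ 0`. -/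
def rayInterval (R : Type*) {V : Type*} [CommSemiring R] [AddCommMonoid V] [Module R V]
    (x y : V) : Set (Set V) :=
  {S | ∃ lam mu : R, lam • x + mu • y ≠ 0 ∧ S = ray R (lam • x + mu • y)}

/-- The open interval `]ray x, ray y[` in the ray space: all rays
`ray (lam • x + mu • y)` with `lam, mu ∈ R ∖ {0}`. -/
def rayOpenInterval (R : Type*) {V : Type*} [CommSemiring R] [AddCommMonoid V] [Module R V]
    (x y : V) : Set (Set V) :=
  {S | ∃ lam mu : R, lam ≠ 0 ∧ mu ≠ 0 ∧ lam • x + mu • y ≠ 0 ∧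
    S = ray R (lam • x + mu • y)}

/-- The half-open interval `[ray x, ray y[` in the ray space: all rays
`ray (lam • x + mu • y)` with `lam ∈ R ∖ {0}` and `mu ∈ R`. -/
def rayHalfOpenInterval (R : Type*) {V : Type*} [CommSemiring R] [AddCommMonoid V] [Module R V]
    (x y : V) : Set (Set V) :=
  {S | ∃ lam mu : R, lam ≠ 0 ∧ lam • x + mu • y ≠ 0 ∧ S = ray R (lam • x + mu • y)}

/-- A set of rays is convex if together with any two of its members it contains the
closed interval between them. -/
def RayConvex (R : Type*) {V : Type*} [CommSemiring R] [AddCommMonoid V] [Module R V]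
    (A : Set (Set V)) : Prop :=
  ∀ x y : V, x ≠ 0 → y ≠ 0 → ray R x ∈ A → ray R y ∈ A → rayInterval R x y ⊆ A

/-- The convex hull of a set of rays: the smallest convex set of rays containing it. -/
def rayConvHull (R : Type*) {V : Type*} [CommSemiring R] [AddCommMonoid V] [Module R V]
    (S : Set (Set V)) : Set (Set V) :=
  ⋂₀ {A : Set (Set V) | S ⊆ A ∧ RayConvex R A}

/-- The ordering `a ≤ b ⟺ a + b = b` (a total order on the ghost ideal `eR`). -/
def rle {R : Type*} [Add R] (a b : R) : Prop := a + b = b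

/-- The strict ordering associated to `rle`. -/
def rlt {R : Type*} [Add R] (a b : R) : Prop := rle a b ∧ a ≠ b

/-- The trilinear map `m(w,x,y) = b(w,y) • x + b(w,x) • y` defining medians. -/
def med {R V : Type*} [CommSemiring R] [AddCommMonoid V] [Module R V]
    (b : V → V → R) (w x y : V) : V :=
  b w y • x + b w x • y

/-- The polar `C^⊥` of a set `C` of rays: all rays `W` such that `b(w,x) = 0`
for every `w ∈ W` and every nonzero `x` with `ray x ∈ C`. -/
def polar (R : Type*) {V : Type*} [CommSemiring R] [AddCommMonoid V] [Module R V]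
    (b : V → V → R) (C : Set (Set V)) : Set (Set V) :=
  {W | W ∈ Rays R V ∧ ∀ w ∈ W, ∀ x : V, x ≠ 0 → ray R x ∈ C → b w x = 0}

/-- The CS-ratio `CS(x,y) = e · b(x,y)² · (q(x)·q(y))⁻¹`, the inverse being taken in the
semifield `eR` (so `inv` is a function with `e * a * inv a = e` for `a ≠ 0`). -/
def CS {R V : Type*} [CommSemiring R] (e : R) (inv : R → R)
    (q : V → R) (b : V → V → R) (x y : V) : R :=
  e * (b x y * b x y) * inv (q x * q y)

/-- decomposition formula for the CS-ratio `CS(w,y)` of a sum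
`w = ∑ lam i • w i` with ghost coefficients. -/
theorem statement0 {R V : Type*} [CommSemiring R] [AddCommMonoid V] [Module R V]
    (e : R) (he : e = 1 + 1)
    (hst : ∀ a b : R, (e * a ≠ e * b → a + b = a ∨ a + b = b) ∧ (e * a = e * b → a + b = e * a))
    (hzd : ∀ a b : R, a * b = 0 → a = 0 ∨ b = 0)
    (hbip : ∀ a b : R, e * a + e * b = e * a ∨ e * a + e * b = e * b)
    (inv : R → R)
    (hinv : ∀ a : R, a ≠ 0 → e * inv a = inv a ∧ e * a * inv a = e)
    (hmod : ∀ (c : R) (x : V), c • x = 0 → c = 0 ∨ x = 0)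
    (q : V → R) (bf : V → V → R)
    (hq : ∀ (a : R) (x : V), q (a • x) = a ^ 2 * q x)
    (hba : ∀ x y z : V, bf (x + y) z = bf x z + bf y z)
    (hbs : ∀ (a : R) (x y : V), bf (a • x) y = a * bf x y)
    (hbsymm : ∀ x y : V, bf x y = bf y x)
    (hcomp : ∀ x y : V, q (x + y) = q x + q y + bf x y)
    (han : ∀ x : V, q x = 0 → x = 0)
    (n : ℕ) (hn : 0 < n) (w : Fin n → V) (hw : ∀ i, w i ≠ 0)
    (lam : Fin n → R) (hlam0 : ∀ i, lam i ≠ 0) (hlamg : ∀ i, e * lam i = lam i) :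
    (∑ i, lam i • w i) ≠ 0 ∧
    (∀ i : Fin n,
        e * (e * q (lam i • w i) * inv (q (∑ j, lam j • w j)))
            = e * q (lam i • w i) * inv (q (∑ j, lam j • w j)) ∧
        rlt (0 : R) (e * q (lam i • w i) * inv (q (∑ j, lam j • w j))) ∧
        rle (e * q (lam i • w i) * inv (q (∑ j, lam j • w j))) e) ∧
    (∀ y : V, y ≠ 0 →
        CS e inv q bf (∑ i, lam i • w i) y
            = ∑ i, CS e inv q bf (w i) y * (e * q (lam i • w i) * inv (q (∑ j, lam j • w j)))) := by
  classical
  have hee : e + e = e := by rcases hbip 1 1 with h | h <;> simpa using h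
  have he2 : e * e = e := by
    calc e * e = e + e := by rw [he]; ring
    _ = e := hee
  have he0 : e ≠ 0 := by
    intro h0
    have h1 : (1 : R) + 0 = e * 1 := (hst 1 0).2 (by simp [h0])
    have h10 : (1 : R) = 0 := by simpa [h0] using h1
    exact hlam0 ⟨0, hn⟩ (by rw [← mul_one (lam ⟨0, hn⟩), h10, mul_zero])
  have hadd0 : ∀ a b : R, a + b = 0 → a = 0 ∧ b = 0 := by
    intro a b hab
    by_cases h : e * a = e * b
    · have h1 : a + b = e * a := (hst a b).2 h
      have ha : a = 0 := by
        rcases hzd e a (by rw [← h1, hab]) with h' | h'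
        · exact absurd h' he0
        · exact h'
      have hb : b = 0 := by simpa [ha] using hab
      exact ⟨ha, hb⟩
    · rcases (hst a b).1 h with h1 | h1
      · have ha : a = 0 := by rw [← h1]; exact hab
        refine ⟨ha, ?_⟩
        have := hab; rwa [ha, zero_add] at this
      · have hb : b = 0 := by rw [← h1]; exact hab
        refine ⟨?_, hb⟩
        have := hab; rwa [hb, add_zero] at this
  have hq0 : q (0 : V) = 0 := by
    have := hq 0 (0 : V); simpa using this
  have hqw0 : ∀ i, q (w i) ≠ 0 := fun i h => hw i (han _ h)
  have hqx0 : ∀ i, q (lam i • w i) ≠ 0 := by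
    intro i h
    rw [hq] at h
    rcases hzd _ _ h with h' | h'
    · rw [pow_two] at h'
      rcases hzd _ _ h' with h'' | h'' <;> exact hlam0 i h''
    · exact hqw0 i h'
  have hgqx : ∀ i, e * q (lam i • w i) = q (lam i • w i) := by
    intro i
    rw [hq]
    calc e * (lam i ^ 2 * q (w i)) = (e * lam i) * (lam i * q (w i)) := by ring
    _ = lam i ^ 2 * q (w i) := by rw [hlamg i]; ring
  -- decomposition of q of a sum
  have hdecomp : ∀ s : Finset (Fin n),
      ∃ c : R, q (∑ j ∈ s, lam j • w j) = (∑ j ∈ s, q (lam j • w j)) + c := by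
    intro s
    induction s using Finset.induction_on with
    | empty => exact ⟨0, by simp [hq0]⟩
    | @insert a s ha ih =>
      obtain ⟨c, hc⟩ := ih
      refine ⟨c + bf (lam a • w a) (∑ j ∈ s, lam j • w j), ?_⟩
      rw [Finset.sum_insert ha, Finset.sum_insert ha, hcomp, hc]
      ring
  have hle : ∀ i, q (lam i • w i) + q (∑ j, lam j • w j) = q (∑ j, lam j • w j) := by
    intro i
    obtain ⟨c, hc⟩ := hdecomp Finset.univ
    have hsplit : (∑ j, q (lam j • w j))
        = q (lam i • w i) + ∑ j ∈ Finset.univ.erase i, q (lam j • w j) :=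
      (Finset.add_sum_erase _ _ (Finset.mem_univ i)).symm
    rw [hc, hsplit]
    have h1 : q (lam i • w i) + ((q (lam i • w i) + ∑ j ∈ Finset.univ.erase i, q (lam j • w j)) + c)
        = e * q (lam i • w i) + ((∑ j ∈ Finset.univ.erase i, q (lam j • w j)) + c) := by
      rw [he]; ring
    rw [h1, hgqx i]; ring
  have hQ0 : q (∑ j, lam j • w j) ≠ 0 := by
    intro h
    have h1 := hle ⟨0, hn⟩
    rw [h, add_zero] at h1
    exact hqx0 ⟨0, hn⟩ h1
  have hW0 : (∑ i, lam i • w i) ≠ 0 := by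
    intro h
    exact hQ0 (by rw [h, hq0])
  have hinvQ := hinv _ hQ0
  have hinvQ0 : inv (q (∑ j, lam j • w j)) ≠ 0 := by
    intro h
    exact he0 (by rw [← hinvQ.2, h, mul_zero])
  -- multiplicativity of inv
  have hinvmul : ∀ a b : R, a ≠ 0 → b ≠ 0 → inv (a * b) = inv a * inv b := by
    intro a b ha hb
    obtain ⟨ha1, ha2⟩ := hinv a ha
    obtain ⟨hb1, hb2⟩ := hinv b hb
    have hab : a * b ≠ 0 := by
      intro h; rcases hzd a b h with h' | h' ; exacts [ha h', hb h']
    obtain ⟨hx1, hx2⟩ := hinv (a * b) hab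
    have hy2 : e * (a * b) * (inv a * inv b) = e := by
      have h1 : e * (e * (a * b) * (inv a * inv b)) = (e * a * inv a) * (e * b * inv b) := by ring
      have h2 : e * (e * (a * b) * (inv a * inv b)) = e * (a * b) * (inv a * inv b) := by
        calc e * (e * (a * b) * (inv a * inv b)) = (e * e) * (a * b) * (inv a * inv b) := by ring
        _ = e * (a * b) * (inv a * inv b) := by rw [he2]
      rw [← h2, h1, ha2, hb2, he2]
    calc inv (a * b) = e * inv (a * b) := hx1.symm
    _ = (e * (a * b) * (inv a * inv b)) * inv (a * b) := by rw [hy2]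
    _ = (inv a * inv b) * (e * (a * b) * inv (a * b)) := by ring
    _ = (inv a * inv b) * e := by rw [hx2]
    _ = e * inv a * inv b := by ring
    _ = inv a * inv b := by rw [ha1]
  -- bilinear form of a sum
  have hb0 : ∀ z : V, bf 0 z = 0 := by
    intro z
    have := hbs 0 (0 : V) z
    simpa using this
  have hbsum : ∀ (s : Finset (Fin n)) (z : V),
      bf (∑ j ∈ s, lam j • w j) z = ∑ j ∈ s, lam j * bf (w j) z := by
    intro s z
    induction s using Finset.induction_on with
    | empty => simpa using hb0 z
    | @insert a s ha ih =>
      rw [Finset.sum_insert ha, Finset.sum_insert ha, hba, hbs, ih]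
  -- sum of ghosts is attained
  have hsum_mem : ∀ (s : Finset (Fin n)) (f : Fin n → R), (∀ i, e * f i = f i) →
      s.Nonempty → ∃ k ∈ s, ∑ i ∈ s, f i = f k := by
    intro s f hg
    induction s using Finset.induction_on with
    | empty => intro h; exact absurd h (by simp)
    | @insert a s ha ih =>
      intro _
      rw [Finset.sum_insert ha]
      rcases s.eq_empty_or_nonempty with rfl | hs
      · exact ⟨a, Finset.mem_insert_self _ _, by simp⟩
      · obtain ⟨k, hk, hsum⟩ := ih hs
        rcases hbip (f a) (f k) with h | h <;> rw [hg a, hg k] at h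
        · exact ⟨a, Finset.mem_insert_self _ _, by rw [hsum, h]⟩
        · exact ⟨k, Finset.mem_insert_of_mem hk, by rw [hsum, h]⟩
  -- sums of dominated terms
  have hrle_sum : ∀ (s : Finset (Fin n)) (f : Fin n → R) (L : R),
      (∀ i ∈ s, f i + L = L) → (∑ i ∈ s, f i) + L = L := by
    intro s f L
    induction s using Finset.induction_on with
    | empty => intro _; simp
    | @insert a s ha ih =>
      intro h
      rw [Finset.sum_insert ha, add_assoc,
        ih (fun i hi => h i (Finset.mem_insert_of_mem hi)), h a (Finset.mem_insert_self a s)]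
  -- squares preserve domination for ghosts
  have hsq : ∀ a b : R, e * a = a → e * b = b → a + b = b → a * a + b * b = b * b := by
    intro a b hga hgb hab
    have hgaa : e * (a * a) = a * a := by rw [← mul_assoc, hga]
    have hgab : e * (a * b) = a * b := by rw [← mul_assoc, hga]
    have h1 : b * b = a * a + e * (a * b) + b * b := by
      calc b * b = (a + b) * (a + b) := by rw [hab]
      _ = a * a + e * (a * b) + b * b := by rw [he]; ring
    calc a * a + b * b = a * a + (a * a + e * (a * b) + b * b) := by rw [← h1]
    _ = e * (a * a) + e * (a * b) + b * b := by rw [he]; ring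
    _ = a * a + a * b + b * b := by rw [hgaa, hgab]
    _ = a * a + e * (a * b) + b * b := by rw [hgab]
    _ = b * b := h1.symm
  refine ⟨hW0, ?_, ?_⟩
  · -- properties of the coefficients
    intro i
    refine ⟨?_, ⟨zero_add _, ?_⟩, ?_⟩
    · calc e * (e * q (lam i • w i) * inv (q (∑ j, lam j • w j)))
          = e * q (lam i • w i) * (e * inv (q (∑ j, lam j • w j))) := by ring
      _ = e * q (lam i • w i) * inv (q (∑ j, lam j • w j)) := by rw [hinvQ.1]
    · intro h
      rcases hzd _ _ h.symm with h' | h'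
      · rcases hzd _ _ h' with h'' | h''
        · exact he0 h''
        · exact hqx0 i h''
      · exact hinvQ0 h'
    · show e * q (lam i • w i) * inv (q (∑ j, lam j • w j)) + e = e
      calc e * q (lam i • w i) * inv (q (∑ j, lam j • w j)) + e
          = e * q (lam i • w i) * inv (q (∑ j, lam j • w j))
            + e * q (∑ j, lam j • w j) * inv (q (∑ j, lam j • w j)) := by rw [hinvQ.2]
      _ = e * (q (lam i • w i) + q (∑ j, lam j • w j)) * inv (q (∑ j, lam j • w j)) := by ring
      _ = e * q (∑ j, lam j • w j) * inv (q (∑ j, lam j • w j)) := by rw [hle i]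
      _ = e := hinvQ.2
  · -- the CS decomposition
    intro y hy
    have hqy0 : q y ≠ 0 := fun h => hy (han y h)
    have hgb' : ∀ i, e * (lam i * bf (w i) y) = lam i * bf (w i) y := by
      intro i
      calc e * (lam i * bf (w i) y) = (e * lam i) * bf (w i) y := by ring
      _ = lam i * bf (w i) y := by rw [hlamg i]
    have hne : (Finset.univ : Finset (Fin n)).Nonempty := ⟨⟨0, hn⟩, Finset.mem_univ _⟩
    obtain ⟨k, -, hk⟩ := hsum_mem Finset.univ (fun i => lam i * bf (w i) y) hgb' hne
    have hlei : ∀ i, (lam i * bf (w i) y) + (lam k * bf (w k) y) = lam k * bf (w k) y := by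
      intro i
      have hsplit : (∑ j, lam j * bf (w j) y)
          = lam i * bf (w i) y + ∑ j ∈ Finset.univ.erase i, lam j * bf (w j) y :=
        (Finset.add_sum_erase _ _ (Finset.mem_univ i)).symm
      calc (lam i * bf (w i) y) + (lam k * bf (w k) y)
          = lam i * bf (w i) y + ∑ j, lam j * bf (w j) y := by rw [hk]
      _ = e * (lam i * bf (w i) y) + ∑ j ∈ Finset.univ.erase i, lam j * bf (w j) y := by
          rw [hsplit, ← add_assoc, he]; ring
      _ = lam i * bf (w i) y + ∑ j ∈ Finset.univ.erase i, lam j * bf (w j) y := by rw [hgb' i]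
      _ = ∑ j, lam j * bf (w j) y := hsplit.symm
      _ = lam k * bf (w k) y := hk
    have h2 : (∑ i, (lam i * bf (w i) y) * (lam i * bf (w i) y))
        + (lam k * bf (w k) y) * (lam k * bf (w k) y)
        = (lam k * bf (w k) y) * (lam k * bf (w k) y) :=
      hrle_sum Finset.univ _ _
        (fun i _ => hsq _ _ (hgb' i) (hgb' k) (hlei i))
    have hsplit2 : (∑ i, (lam i * bf (w i) y) * (lam i * bf (w i) y))
        = (lam k * bf (w k) y) * (lam k * bf (w k) y)
          + ∑ i ∈ Finset.univ.erase k, (lam i * bf (w i) y) * (lam i * bf (w i) y) :=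
      (Finset.add_sum_erase _ _ (Finset.mem_univ k)).symm
    have hgL : e * ((lam k * bf (w k) y) * (lam k * bf (w k) y))
        = (lam k * bf (w k) y) * (lam k * bf (w k) y) := by
      rw [← mul_assoc, hgb' k]
    have h3 : (lam k * bf (w k) y) * (lam k * bf (w k) y)
        + (∑ i, (lam i * bf (w i) y) * (lam i * bf (w i) y))
        = ∑ i, (lam i * bf (w i) y) * (lam i * bf (w i) y) := by
      calc (lam k * bf (w k) y) * (lam k * bf (w k) y)
          + (∑ i, (lam i * bf (w i) y) * (lam i * bf (w i) y))
          = e * ((lam k * bf (w k) y) * (lam k * bf (w k) y))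
            + ∑ i ∈ Finset.univ.erase k, (lam i * bf (w i) y) * (lam i * bf (w i) y) := by
            rw [hsplit2, ← add_assoc, he]; ring
      _ = (lam k * bf (w k) y) * (lam k * bf (w k) y)
            + ∑ i ∈ Finset.univ.erase k, (lam i * bf (w i) y) * (lam i * bf (w i) y) := by rw [hgL]
      _ = ∑ i, (lam i * bf (w i) y) * (lam i * bf (w i) y) := hsplit2.symm
    have hsqsum : (∑ i, (lam i * bf (w i) y) * (lam i * bf (w i) y))
        = (lam k * bf (w k) y) * (lam k * bf (w k) y) := by
      rw [← h3, add_comm]; exact h2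
    have hLHS : CS e inv q bf (∑ i, lam i • w i) y
        = e * ((∑ i, lam i * bf (w i) y) * (∑ i, lam i * bf (w i) y))
          * (inv (q (∑ j, lam j • w j)) * inv (q y)) := by
      simp only [CS]
      rw [hbsum Finset.univ y, hinvmul _ _ hQ0 hqy0]
    have hS2 : (∑ i, lam i * bf (w i) y) * (∑ i, lam i * bf (w i) y)
        = ∑ i, (lam i * bf (w i) y) * (lam i * bf (w i) y) := by
      rw [hk]; exact hsqsum.symm
    have hterm2 : ∀ i ∈ (Finset.univ : Finset (Fin n)),
        CS e inv q bf (w i) y * (e * q (lam i • w i) * inv (q (∑ j, lam j • w j)))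
        = e * ((lam i * bf (w i) y) * (lam i * bf (w i) y))
          * (inv (q (∑ j, lam j • w j)) * inv (q y)) := by
      intro i _
      simp only [CS]
      rw [hinvmul _ _ (hqw0 i) hqy0, hq]
      have h6 : e * (bf (w i) y * bf (w i) y) * (inv (q (w i)) * inv (q y))
          * (e * (lam i ^ 2 * q (w i)) * inv (q (∑ j, lam j • w j)))
          = (e * q (w i) * inv (q (w i)))
            * (e * ((lam i * bf (w i) y) * (lam i * bf (w i) y))
              * (inv (q (∑ j, lam j • w j)) * inv (q y))) := by ring
      rw [h6, (hinv _ (hqw0 i)).2]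
      calc e * (e * ((lam i * bf (w i) y) * (lam i * bf (w i) y))
            * (inv (q (∑ j, lam j • w j)) * inv (q y)))
          = (e * e) * ((lam i * bf (w i) y) * (lam i * bf (w i) y))
            * (inv (q (∑ j, lam j • w j)) * inv (q y)) := by ring
      _ = e * ((lam i * bf (w i) y) * (lam i * bf (w i) y))
            * (inv (q (∑ j, lam j • w j)) * inv (q y)) := by rw [he2]
    rw [hLHS, hS2, Finset.sum_congr rfl hterm2, Finset.mul_sum, Finset.sum_mul]

end SupertropicalCS
end

section
/- (CS-Convexity Lemma) Let □ be one of the relations <, ≤, =. Let W₁, …, W_m and Y₁, …, Yₙ be rays in V and let γ₁, …, γₙ, δ₁, …, δₙ ∈ eR be such that Σⱼ γⱼ·CS(Wᵢ, Yⱼ) □ Σⱼ δⱼ·CS(Wᵢ, Yⱼ) holds for every i = 1, …, m. Then for every ray W ∈ conv(W₁, …, W_m) one has Σⱼ γⱼ·CS(W, Yⱼ) □ Σⱼ δⱼ·CS(W, Yⱼ). -/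
namespace SupertropicalCS

section Aux

variable {R : Type*} [CommSemiring R]

/-- Cancellation of a nonzero factor between two "ghost" elements. -/
lemma ghost_cancel (e : R) (inv : R → R)
    (hinv : ∀ a : R, a ≠ 0 → e * inv a = inv a ∧ e * a * inv a = e)
    {X Y c : R} (hX : e * X = X) (hY : e * Y = Y) (hc : c ≠ 0) (h : X * c = Y * c) :
    X = Y := by
  have h2 := (hinv c hc).2
  calc X = X * (e * c * inv c) := by rw [h2, mul_comm X e, hX]
    _ = X * c * (e * inv c) := by ring
    _ = Y * c * (e * inv c) := by rw [h]
    _ = Y * (e * c * inv c) := by ring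
    _ = Y := by rw [h2, mul_comm Y e, hY]

/-- Cross-multiplication rule for ghost fractions. -/
lemma einv_eq (e : R) (inv : R → R) (hee : e * e = e)
    (hinv : ∀ a : R, a ≠ 0 → e * inv a = inv a ∧ e * a * inv a = e)
    (hzd : ∀ a b : R, a * b = 0 → a = 0 ∨ b = 0)
    {B C s t : R} (hs : s ≠ 0) (ht : t ≠ 0) (h : B * t = C * s) :
    e * B * inv s = e * C * inv t := by
  apply ghost_cancel e inv hinv (c := s * t)
  · calc e * (e * B * inv s) = (e * e) * B * inv s := by ring
      _ = e * B * inv s := by rw [hee]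
  · calc e * (e * C * inv t) = (e * e) * C * inv t := by ring
      _ = e * C * inv t := by rw [hee]
  · exact fun h0 => (hzd s t h0).elim hs ht
  · calc (e * B * inv s) * (s * t) = (B * t) * (e * s * inv s) := by ring
      _ = (C * s) * (e * t * inv t) := by rw [h, (hinv s hs).2, (hinv t ht).2]
      _ = (e * C * inv t) * (s * t) := by ring

/-- Ghost "Frobenius": `e(s+t)² = es² + et²`. -/
lemma ghost_sq (e : R) (hee2 : e + e = e)
    (hbip : ∀ a b : R, e * a + e * b = e * a ∨ e * a + e * b = e * b)
    (s t : R) : e * ((s + t) * (s + t)) = e * (s * s) + e * (t * t) := by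
  have expand : e * ((s + t) * (s + t)) = (e * (s * s) + e * (t * t)) + (e + e) * (s * t) := by
    ring
  rw [hee2] at expand
  rw [expand]
  rcases hbip s t with hc | hc
  · have habs : e * (s * t) + e * (s * s) = e * (s * s) := by
      calc e * (s * t) + e * (s * s) = (e * s + e * t) * s := by ring
        _ = (e * s) * s := by rw [hc]
        _ = e * (s * s) := by ring
    calc e * (s * s) + e * (t * t) + e * (s * t)
        = (e * (s * t) + e * (s * s)) + e * (t * t) := by ring
      _ = e * (s * s) + e * (t * t) := by rw [habs]
  · have habs : e * (s * t) + e * (t * t) = e * (t * t) := by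
      calc e * (s * t) + e * (t * t) = (e * s + e * t) * t := by ring
        _ = (e * t) * t := by rw [hc]
        _ = e * (t * t) := by ring
    calc e * (s * s) + e * (t * t) + e * (s * t)
        = e * (s * s) + (e * (s * t) + e * (t * t)) := by ring
      _ = e * (s * s) + e * (t * t) := by rw [habs]

end Aux

/-- CS-Convexity Lemma: a linear CS-relation (with `<`, `≤` or `=`) holding
at rays `W₁, …, W_m` holds at every ray of their convex hull. -/
theorem statement2 {R V : Type*} [CommSemiring R] [AddCommMonoid V] [Module R V]
    (e : R) (he : e = 1 + 1)
    (hst : ∀ a b : R, (e * a ≠ e * b → a + b = a ∨ a + b = b) ∧ (e * a = e * b → a + b = e * a))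
    (hzd : ∀ a b : R, a * b = 0 → a = 0 ∨ b = 0)
    (hbip : ∀ a b : R, e * a + e * b = e * a ∨ e * a + e * b = e * b)
    (inv : R → R)
    (hinv : ∀ a : R, a ≠ 0 → e * inv a = inv a ∧ e * a * inv a = e)
    (hmod : ∀ (c : R) (x : V), c • x = 0 → c = 0 ∨ x = 0)
    (q : V → R) (bf : V → V → R)
    (hq : ∀ (a : R) (x : V), q (a • x) = a ^ 2 * q x)
    (hba : ∀ x y z : V, bf (x + y) z = bf x z + bf y z)
    (hbs : ∀ (a : R) (x y : V), bf (a • x) y = a * bf x y)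
    (hbsymm : ∀ x y : V, bf x y = bf y x)
    (hcomp : ∀ x y : V, q (x + y) = q x + q y + bf x y)
    (han : ∀ x : V, q x = 0 → x = 0)
    (rel : R → R → Prop)
    (hrel : rel = rlt ∨ rel = rle ∨ rel = fun a b => a = b)
    (m n : ℕ) (w : Fin m → V) (hw : ∀ i, w i ≠ 0) (y : Fin n → V) (hy : ∀ j, y j ≠ 0)
    (gam del : Fin n → R)
    (hgam : ∀ j, e * gam j = gam j) (hdel : ∀ j, e * del j = del j)
    (h : ∀ i, rel (∑ j, gam j * CS e inv q bf (w i) (y j))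
              (∑ j, del j * CS e inv q bf (w i) (y j))) :
    ∀ u : V, u ≠ 0 → ray R u ∈ rayConvHull R {S | ∃ i, S = ray R (w i)} →
      rel (∑ j, gam j * CS e inv q bf u (y j))
          (∑ j, del j * CS e inv q bf u (y j)) := by
  intro u hu hconv
  -- basic facts
  have hee2 : e + e = e := by
    rcases hbip 1 1 with hc | hc <;> simpa using hc
  have hee : e * e = e := by
    have h1 : e * (1 + 1) = e + e := by ring
    rw [← he] at h1
    rw [h1, hee2]
  have mul_ne : ∀ {p p' : R}, p ≠ 0 → p' ≠ 0 → p * p' ≠ 0 :=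
    fun hp hp' h0 => ((hzd _ _ h0).elim hp hp')
  have qne : ∀ {x : V}, x ≠ 0 → q x ≠ 0 := fun {x} hx h0 => hx (han _ h0)
  have one_ne : (1 : R) ≠ 0 := by
    intro h1
    apply hu
    calc u = (1 : R) • u := (one_smul R u).symm
      _ = (0 : R) • u := by rw [h1]
      _ = 0 := zero_smul R u
  have sqne : ∀ {a : R}, a ≠ 0 → a ^ 2 ≠ 0 := by
    intro a ha h0
    rw [pow_two] at h0
    exact (hzd _ _ h0).elim ha ha
  -- CS is invariant under scaling of the first argument
  have CS_smul : ∀ (a : R) (x yy : V), a ≠ 0 → x ≠ 0 → yy ≠ 0 →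
      CS e inv q bf (a • x) yy = CS e inv q bf x yy := by
    intro a x yy ha hx hyy
    unfold CS
    rw [hbs, hq]
    exact einv_eq e inv hee hinv hzd
      (mul_ne (mul_ne (sqne ha) (qne hx)) (qne hyy))
      (mul_ne (qne hx) (qne hyy)) (by ring)
  -- the key per-term identity
  have key : ∀ (x z yy : V) (lam mu : R), x ≠ 0 → z ≠ 0 → yy ≠ 0 →
      lam ≠ 0 → mu ≠ 0 → lam • x + mu • z ≠ 0 →
      q (lam • x + mu • z) * CS e inv q bf (lam • x + mu • z) yy =
        lam ^ 2 * q x * CS e inv q bf x yy + mu ^ 2 * q z * CS e inv q bf z yy := by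
    intro x z yy lam mu hx hz hyy hl hm hv
    have hc : q (lam • x + mu • z) ≠ 0 := qne hv
    have hqy : q yy ≠ 0 := qne hyy
    have hbv : bf (lam • x + mu • z) yy = lam * bf x yy + mu * bf z yy := by
      rw [hba, hbs, hbs]
    have stepA : q (lam • x + mu • z) * CS e inv q bf (lam • x + mu • z) yy =
        e * (bf (lam • x + mu • z) yy * bf (lam • x + mu • z) yy) * inv (q yy) := by
      unfold CS
      have h2 : e * (q (lam • x + mu • z)) * inv (q (lam • x + mu • z) * q yy) =
          e * 1 * inv (q yy) :=
        einv_eq e inv hee hinv hzd (mul_ne hc hqy) hqy (by ring)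
      calc q (lam • x + mu • z) *
            (e * (bf (lam • x + mu • z) yy * bf (lam • x + mu • z) yy) *
              inv (q (lam • x + mu • z) * q yy))
          = (bf (lam • x + mu • z) yy * bf (lam • x + mu • z) yy) *
              (e * (q (lam • x + mu • z)) * inv (q (lam • x + mu • z) * q yy)) := by ring
        _ = (bf (lam • x + mu • z) yy * bf (lam • x + mu • z) yy) *
              (e * 1 * inv (q yy)) := by rw [h2]
        _ = e * (bf (lam • x + mu • z) yy * bf (lam • x + mu • z) yy) * inv (q yy) := by
              ring
    have stepB : ∀ (ww : V), ww ≠ 0 → ∀ (a : R), a ≠ 0 →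
        a ^ 2 * q ww * CS e inv q bf ww yy =
          e * ((a * bf ww yy) * (a * bf ww yy)) * inv (q yy) := by
      intro ww hw' a ha
      unfold CS
      calc a ^ 2 * q ww * (e * (bf ww yy * bf ww yy) * inv (q ww * q yy))
          = e * (a ^ 2 * q ww * (bf ww yy * bf ww yy)) * inv (q ww * q yy) := by ring
        _ = e * ((a * bf ww yy) * (a * bf ww yy)) * inv (q yy) :=
            einv_eq e inv hee hinv hzd (mul_ne (qne hw') hqy) hqy (by ring)
    have hsq : e * (bf (lam • x + mu • z) yy * bf (lam • x + mu • z) yy) =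
        e * ((lam * bf x yy) * (lam * bf x yy)) +
          e * ((mu * bf z yy) * (mu * bf z yy)) := by
      rw [hbv]
      exact ghost_sq e hee2 hbip _ _
    rw [stepA, stepB x hx lam hl, stepB z hz mu hm, hsq]
    ring
  -- ghostness of the relevant sums
  have ghost_sum : ∀ (W : Fin n → R), (∀ j, e * W j = W j) → ∀ (xx : V),
      e * (∑ j, W j * CS e inv q bf xx (y j)) = ∑ j, W j * CS e inv q bf xx (y j) := by
    intro W hW xx
    rw [Finset.mul_sum]
    refine Finset.sum_congr rfl fun j _ => ?_
    rw [← mul_assoc, hW j]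
  -- sums are invariant under scaling
  have ssum : ∀ (a : R) (x : V), a ≠ 0 → x ≠ 0 → ∀ (W : Fin n → R),
      (∑ j, W j * CS e inv q bf (a • x) (y j)) = ∑ j, W j * CS e inv q bf x (y j) := by
    intro a x ha hx W
    exact Finset.sum_congr rfl fun j _ => by rw [CS_smul a x (y j) ha hx (hy j)]
  -- the relation is invariant along rays
  have Pray : ∀ x xu : V, x ≠ 0 → xu ≠ 0 → ray R x = ray R xu →
      rel (∑ j, gam j * CS e inv q bf x (y j)) (∑ j, del j * CS e inv q bf x (y j)) →
      rel (∑ j, gam j * CS e inv q bf xu (y j)) (∑ j, del j * CS e inv q bf xu (y j)) := by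
    intro x xu hx hxu hxy hrelx
    have hmem : xu ∈ ray R x := by
      rw [hxy]
      exact ⟨hxu, 1, 1, one_ne, one_ne, rfl⟩
    obtain ⟨-, lam, mu, hl, hm, heq⟩ := hmem
    have hs : ∀ W : Fin n → R,
        (∑ j, W j * CS e inv q bf xu (y j)) = ∑ j, W j * CS e inv q bf x (y j) := by
      intro W
      calc (∑ j, W j * CS e inv q bf xu (y j))
          = ∑ j, W j * CS e inv q bf (mu • xu) (y j) := (ssum mu xu hm hxu W).symm
        _ = ∑ j, W j * CS e inv q bf (lam • x) (y j) := by rw [← heq]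
        _ = ∑ j, W j * CS e inv q bf x (y j) := ssum lam x hl hx W
    rw [hs gam, hs del]
    exact hrelx
  -- bipotence for ghosts
  have bip' : ∀ p p' : R, e * p = p → e * p' = p' → p + p' = p ∨ p + p' = p' := by
    intro p p' hp hp'
    have hb := hbip p p'
    rw [hp, hp'] at hb
    exact hb
  -- the relation is preserved on intervals
  have Pconv : ∀ (x z : V) (lam mu : R), x ≠ 0 → z ≠ 0 →
      rel (∑ j, gam j * CS e inv q bf x (y j)) (∑ j, del j * CS e inv q bf x (y j)) →
      rel (∑ j, gam j * CS e inv q bf z (y j)) (∑ j, del j * CS e inv q bf z (y j)) →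
      lam • x + mu • z ≠ 0 →
      rel (∑ j, gam j * CS e inv q bf (lam • x + mu • z) (y j))
          (∑ j, del j * CS e inv q bf (lam • x + mu • z) (y j)) := by
    intro x z lam mu hx hz hPx hPz hv
    by_cases hl : lam = 0
    · subst hl
      have hv0 : (0 : R) • x + mu • z = mu • z := by rw [zero_smul, zero_add]
      rw [hv0] at hv ⊢
      have hm : mu ≠ 0 := by
        rintro rfl
        exact hv (zero_smul R z)
      rw [ssum mu z hm hz gam, ssum mu z hm hz del]
      exact hPz
    by_cases hm : mu = 0
    · subst hm
      have hv0 : lam • x + (0 : R) • z = lam • x := by rw [zero_smul, add_zero]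
      rw [hv0] at hv ⊢
      rw [ssum lam x hl hx gam, ssum lam x hl hx del]
      exact hPx
    -- main case
    have hqv : q (lam • x + mu • z) ≠ 0 := qne hv
    have ha : lam ^ 2 * q x ≠ 0 := mul_ne (sqne hl) (qne hx)
    have hb2 : mu ^ 2 * q z ≠ 0 := mul_ne (sqne hm) (qne hz)
    have idW : ∀ W : Fin n → R,
        q (lam • x + mu • z) * (∑ j, W j * CS e inv q bf (lam • x + mu • z) (y j)) =
          lam ^ 2 * q x * (∑ j, W j * CS e inv q bf x (y j)) +
            mu ^ 2 * q z * (∑ j, W j * CS e inv q bf z (y j)) := by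
      intro W
      rw [Finset.mul_sum, Finset.mul_sum, Finset.mul_sum, ← Finset.sum_add_distrib]
      refine Finset.sum_congr rfl fun j _ => ?_
      have k := key x z (y j) lam mu hx hz (hy j) hl hm hv
      calc q (lam • x + mu • z) * (W j * CS e inv q bf (lam • x + mu • z) (y j))
          = W j * (q (lam • x + mu • z) * CS e inv q bf (lam • x + mu • z) (y j)) := by
            ring
        _ = W j * (lam ^ 2 * q x * CS e inv q bf x (y j) +
              mu ^ 2 * q z * CS e inv q bf z (y j)) := by rw [k]
        _ = lam ^ 2 * q x * (W j * CS e inv q bf x (y j)) +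
              mu ^ 2 * q z * (W j * CS e inv q bf z (y j)) := by ring
    have gGv := ghost_sum gam hgam (lam • x + mu • z)
    have gDv := ghost_sum del hdel (lam • x + mu • z)
    have gGx := ghost_sum gam hgam x
    have gDx := ghost_sum del hdel x
    have gGz := ghost_sum gam hgam z
    have gDz := ghost_sum del hdel z
    have idG := idW gam
    have idD := idW del
    -- the "≤" part of the argument, usable in all three cases
    have le_step :
        (∑ j, gam j * CS e inv q bf x (y j)) + (∑ j, del j * CS e inv q bf x (y j)) =
          (∑ j, del j * CS e inv q bf x (y j)) →
        (∑ j, gam j * CS e inv q bf z (y j)) + (∑ j, del j * CS e inv q bf z (y j)) =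
          (∑ j, del j * CS e inv q bf z (y j)) →
        (∑ j, gam j * CS e inv q bf (lam • x + mu • z) (y j)) +
            (∑ j, del j * CS e inv q bf (lam • x + mu • z) (y j)) =
          (∑ j, del j * CS e inv q bf (lam • x + mu • z) (y j)) := by
      intro hx1 hz1
      apply ghost_cancel e inv hinv (c := q (lam • x + mu • z)) ?_ gDv hqv
      · calc ((∑ j, gam j * CS e inv q bf (lam • x + mu • z) (y j)) +
              (∑ j, del j * CS e inv q bf (lam • x + mu • z) (y j))) *
                q (lam • x + mu • z)
            = q (lam • x + mu • z) *
                (∑ j, gam j * CS e inv q bf (lam • x + mu • z) (y j)) +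
              q (lam • x + mu • z) *
                (∑ j, del j * CS e inv q bf (lam • x + mu • z) (y j)) := by ring
          _ = (lam ^ 2 * q x * (∑ j, gam j * CS e inv q bf x (y j)) +
                mu ^ 2 * q z * (∑ j, gam j * CS e inv q bf z (y j))) +
              (lam ^ 2 * q x * (∑ j, del j * CS e inv q bf x (y j)) +
                mu ^ 2 * q z * (∑ j, del j * CS e inv q bf z (y j))) := by
              rw [idG, idD]
          _ = lam ^ 2 * q x * ((∑ j, gam j * CS e inv q bf x (y j)) +
                (∑ j, del j * CS e inv q bf x (y j))) +
              mu ^ 2 * q z * ((∑ j, gam j * CS e inv q bf z (y j)) +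
                (∑ j, del j * CS e inv q bf z (y j))) := by ring
          _ = lam ^ 2 * q x * (∑ j, del j * CS e inv q bf x (y j)) +
              mu ^ 2 * q z * (∑ j, del j * CS e inv q bf z (y j)) := by rw [hx1, hz1]
          _ = q (lam • x + mu • z) *
                (∑ j, del j * CS e inv q bf (lam • x + mu • z) (y j)) := idD.symm
          _ = (∑ j, del j * CS e inv q bf (lam • x + mu • z) (y j)) *
                q (lam • x + mu • z) := mul_comm _ _
      · rw [mul_add, gGv, gDv]
    -- the "≠" part of the argument
    have ne_step :
        ((∑ j, gam j * CS e inv q bf x (y j)) + (∑ j, del j * CS e inv q bf x (y j)) =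
          (∑ j, del j * CS e inv q bf x (y j))) →
        ((∑ j, gam j * CS e inv q bf x (y j)) ≠ (∑ j, del j * CS e inv q bf x (y j))) →
        ((∑ j, gam j * CS e inv q bf z (y j)) + (∑ j, del j * CS e inv q bf z (y j)) =
          (∑ j, del j * CS e inv q bf z (y j))) →
        ((∑ j, gam j * CS e inv q bf z (y j)) ≠ (∑ j, del j * CS e inv q bf z (y j))) →
        (∑ j, gam j * CS e inv q bf (lam • x + mu • z) (y j)) ≠
          (∑ j, del j * CS e inv q bf (lam • x + mu • z) (y j)) := by
      intro hx1 hx2 hz1 hz2 hEq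
      have hcontra : lam ^ 2 * q x * (∑ j, gam j * CS e inv q bf x (y j)) +
            mu ^ 2 * q z * (∑ j, gam j * CS e inv q bf z (y j)) =
          lam ^ 2 * q x * (∑ j, del j * CS e inv q bf x (y j)) +
            mu ^ 2 * q z * (∑ j, del j * CS e inv q bf z (y j)) := by
        rw [← idG, ← idD, hEq]
      set U1 := lam ^ 2 * q x * (∑ j, gam j * CS e inv q bf x (y j)) with hU1def
      set V1 := lam ^ 2 * q x * (∑ j, del j * CS e inv q bf x (y j)) with hV1def
      set U2 := mu ^ 2 * q z * (∑ j, gam j * CS e inv q bf z (y j)) with hU2def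
      set V2 := mu ^ 2 * q z * (∑ j, del j * CS e inv q bf z (y j)) with hV2def
      have gU1 : e * U1 = U1 := by
        rw [hU1def, ← mul_assoc, mul_comm e (lam ^ 2 * q x), mul_assoc, gGx]
      have gV1 : e * V1 = V1 := by
        rw [hV1def, ← mul_assoc, mul_comm e (lam ^ 2 * q x), mul_assoc, gDx]
      have gU2 : e * U2 = U2 := by
        rw [hU2def, ← mul_assoc, mul_comm e (mu ^ 2 * q z), mul_assoc, gGz]
      have gV2 : e * V2 = V2 := by
        rw [hV2def, ← mul_assoc, mul_comm e (mu ^ 2 * q z), mul_assoc, gDz]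
      have hUV1 : U1 + V1 = V1 := by
        rw [hU1def, hV1def, ← mul_add, hx1]
      have hUV2 : U2 + V2 = V2 := by
        rw [hU2def, hV2def, ← mul_add, hz1]
      have hne1 : U1 ≠ V1 := by
        intro hcc
        apply hx2
        apply ghost_cancel e inv hinv gGx gDx ha
        rw [mul_comm _ (lam ^ 2 * q x), mul_comm _ (lam ^ 2 * q x)]
        exact hcc
      have hne2 : U2 ≠ V2 := by
        intro hcc
        apply hz2
        apply ghost_cancel e inv hinv gGz gDz hb2
        rw [mul_comm _ (mu ^ 2 * q z), mul_comm _ (mu ^ 2 * q z)]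
        exact hcc
      rcases bip' V1 V2 gV1 gV2 with hV | hV <;> rcases bip' U1 U2 gU1 gU2 with hU | hU
      · exact hne1 (hU.symm.trans (hcontra.trans hV))
      · have h21 : U2 = V1 := hU.symm.trans (hcontra.trans hV)
        have h12 : V1 + V2 = V2 := by rw [← h21, hUV2]
        exact hne2 (h21.trans (hV.symm.trans h12))
      · have h12 : U1 = V2 := hU.symm.trans (hcontra.trans hV)
        have h21 : V1 + V2 = V1 := by
          rw [← h12, add_comm]
          exact hUV1
        exact hne1 (h12.trans (h21.symm.trans hV).symm)
      · exact hne2 (hU.symm.trans (hcontra.trans hV))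
    rcases hrel with hr | hr | hr <;> subst hr
    · obtain ⟨hx1, hx2⟩ := hPx
      obtain ⟨hz1, hz2⟩ := hPz
      exact ⟨le_step hx1 hz1, ne_step hx1 hx2 hz1 hz2⟩
    · exact le_step hPx hPz
    · apply ghost_cancel e inv hinv gGv gDv hqv
      rw [mul_comm _ (q (lam • x + mu • z)), mul_comm _ (q (lam • x + mu • z)), idG, idD,
        hPx, hPz]
  -- assemble: the set of rays where the relation holds is convex and contains the w i
  have hA : ray R u ∈ {S : Set V | ∃ x : V, x ≠ 0 ∧ S = ray R x ∧
      rel (∑ j, gam j * CS e inv q bf x (y j)) (∑ j, del j * CS e inv q bf x (y j))} := by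
    refine Set.mem_sInter.mp hconv _ ⟨?_, ?_⟩
    · rintro S ⟨i, rfl⟩
      exact ⟨w i, hw i, rfl, h i⟩
    · rintro x z hx hz ⟨x', hx', hxx', hPx'⟩ ⟨z', hz', hzz', hPz'⟩ S ⟨lam, mu, hvne, rfl⟩
      exact ⟨lam • x + mu • z, hvne, rfl,
        Pconv x z lam mu hx hz (Pray x' x hx' hx hxx'.symm hPx')
          (Pray z' z hz' hz hzz'.symm hPz') hvne⟩
  obtain ⟨x, hx0, hxu, hPx⟩ := hA
  exact Pray x u hx0 hu hxu.symm hPx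

end SupertropicalCS
end

section
/- Fix rays Y₁, …, Yₙ in V, a finite index set K, and for each k ∈ K coefficients γ₁^(k), …, γₙ^(k), δ₁^(k), …, δₙ^(k) ∈ eR together with a relation □_k ∈ {<, ≤, =}. Then the locus {W ∈ Ray(V) : for all k ∈ K, Σⱼ γⱼ^(k)·CS(W, Yⱼ) □_k Σⱼ δⱼ^(k)·CS(W, Yⱼ)} is a convex subset of Ray(V). In particular, for any pair of distinct rays (Y₁, Y₂), every locus of a basic or composed CS-profile type — a conjunction of relations among 0, CS(W, Y₁), CS(W, Y₂) and CS(Y₁, Y₂)⁻¹·CS(W, Y₂) with relations from {<, ≤, =}, such as {W : 0 < CS(Y₁, Y₂)⁻¹·CS(W, Y₂) < CS(W, Y₁) < CS(W, Y₂)} — is convex. -/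
namespace SupertropicalCS

section Aux

variable {R : Type*} [CommSemiring R]

lemma aux_cancel (e : R) (inv : R → R)
    (hinv : ∀ a : R, a ≠ 0 → e * inv a = inv a ∧ e * a * inv a = e)
    {a b c : R} (ha : e * a = a) (hb : e * b = b) (hc : c ≠ 0) (h : c * a = c * b) : a = b := by
  have h1 := (hinv c hc).2
  have ea : inv c * (c * a) * e = a := by
    calc inv c * (c * a) * e = (e * c * inv c) * a := by ring
      _ = e * a := by rw [h1]
      _ = a := ha
  have eb : inv c * (c * b) * e = b := by
    calc inv c * (c * b) * e = (e * c * inv c) * b := by ring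
      _ = e * b := by rw [h1]
      _ = b := hb
  rw [← ea, h, eb]

lemma aux_invmul (e : R) (inv : R → R)
    (hinv : ∀ a : R, a ≠ 0 → e * inv a = inv a ∧ e * a * inv a = e)
    (hzd : ∀ a b : R, a * b = 0 → a = 0 ∨ b = 0)
    {a b : R} (ha : a ≠ 0) (hb : b ≠ 0) : inv (a * b) = inv a * inv b := by
  have hab : a * b ≠ 0 := fun h => (hzd a b h).elim ha hb
  have u1 := hinv a ha
  have u2 := hinv b hb
  have u3 := hinv (a * b) hab
  have key : e * (a * b) * (inv a * inv b) = e := by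
    calc e * (a * b) * (inv a * inv b) = (e * a * inv a) * (b * inv b) := by ring
      _ = e * (b * inv b) := by rw [u1.2]
      _ = e * b * inv b := by ring
      _ = e := u2.2
  calc inv (a * b) = e * inv (a * b) := u3.1.symm
    _ = (e * (a * b) * (inv a * inv b)) * inv (a * b) := by rw [key]
    _ = (e * (a * b) * inv (a * b)) * (inv a * inv b) := by ring
    _ = e * (inv a * inv b) := by rw [u3.2]
    _ = (e * inv a) * inv b := by ring
    _ = inv a * inv b := by rw [u1.1]

lemma aux_rle_add {a b c d : R} (h1 : rle a b) (h2 : rle c d) : rle (a + c) (b + d) := by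
  have h1' : a + b = b := h1
  have h2' : c + d = d := h2
  show a + c + (b + d) = b + d
  calc a + c + (b + d) = (a + b) + (c + d) := by ring
    _ = b + d := by rw [h1', h2']

lemma aux_rle_mul (c : R) {a b : R} (h : rle a b) : rle (c * a) (c * b) := by
  have h' : a + b = b := h
  show c * a + c * b = c * b
  rw [← mul_add, h']

lemma aux_rtotal (e : R) (hbip : ∀ a b : R, e * a + e * b = e * a ∨ e * a + e * b = e * b)
    {a b : R} (ha : e * a = a) (hb : e * b = b) : rle a b ∨ rle b a := by
  rcases hbip a b with h | h
  · right
    rw [ha, hb] at h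
    show b + a = a
    rw [add_comm]
    exact h
  · left
    rw [ha, hb] at h
    exact h

lemma aux_rlt_mul (e : R) (inv : R → R)
    (hinv : ∀ a : R, a ≠ 0 → e * inv a = inv a ∧ e * a * inv a = e)
    {a b c : R} (ha : e * a = a) (hb : e * b = b) (hc : c ≠ 0) (h : rlt a b) :
    rlt (c * a) (c * b) :=
  ⟨aux_rle_mul c h.1, fun hq => h.2 (aux_cancel e inv hinv ha hb hc hq)⟩

lemma aux_rlt_add (e : R) (hbip : ∀ a b : R, e * a + e * b = e * a ∨ e * a + e * b = e * b)
    {a b c d : R} (hpa : e * a = a) (hpb : e * b = b) (hpc : e * c = c) (hpd : e * d = d)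
    (h1 : rlt a b) (h2 : rlt c d) : rlt (a + c) (b + d) := by
  refine ⟨aux_rle_add h1.1 h2.1, ?_⟩
  intro heq
  have hbd := hbip b d
  rw [hpb, hpd] at hbd
  have hac := hbip a c
  rw [hpa, hpc] at hac
  have h1le : a + b = b := h1.1
  have h2le : c + d = d := h2.1
  rcases hbd with hbd | hbd
  · rcases hac with hac | hac
    · exact h1.2 (by rw [← hac, heq, hbd])
    · have hcb : c = b := by rw [← hac, heq, hbd]
      have hdc : d + c = c := by
        rw [hcb, add_comm]
        exact hbd
      exact h2.2 (by calc c = d + c := hdc.symm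
        _ = c + d := add_comm _ _
        _ = d := h2le)
  · rcases hac with hac | hac
    · have had : a = d := by rw [← hac, heq, hbd]
      rw [← had] at hbd
      exact h1.2 (by calc a = b + a := hbd.symm
        _ = a + b := add_comm _ _
        _ = b := h1le)
    · exact h2.2 (by rw [← hac, heq, hbd])

lemma aux_cross (e : R) (inv : R → R)
    (hinv : ∀ a : R, a ≠ 0 → e * inv a = inv a ∧ e * a * inv a = e)
    (hzd : ∀ a b : R, a * b = 0 → a = 0 ∨ b = 0)
    (hbip : ∀ a b : R, e * a + e * b = e * a ∨ e * a + e * b = e * b)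
    (hee : e * e = e) (c d : R) :
    e * (c * d) + (e * (c * c) + e * (d * d)) = e * (c * c) + e * (d * d) := by
  by_cases hc : c = 0
  · simp [hc]
  by_cases hd : d = 0
  · simp [hd]
  have hP : ∀ r : R, e * (e * r) = e * r := fun r => by rw [← mul_assoc, hee]
  rcases aux_rtotal e hbip (hP (c * d)) (hP (c * c)) with h | h
  · have h' : e * (c * d) + e * (c * c) = e * (c * c) := h
    calc e * (c * d) + (e * (c * c) + e * (d * d))
        = (e * (c * d) + e * (c * c)) + e * (d * d) := by ring
      _ = e * (c * c) + e * (d * d) := by rw [h']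
  rcases aux_rtotal e hbip (hP (c * d)) (hP (d * d)) with h2 | h2
  · have h2' : e * (c * d) + e * (d * d) = e * (d * d) := h2
    calc e * (c * d) + (e * (c * c) + e * (d * d))
        = e * (c * c) + (e * (c * d) + e * (d * d)) := by ring
      _ = e * (c * c) + e * (d * d) := by rw [h2']
  have k1 := aux_rle_mul d h
  have k2 := aux_rle_mul c h2
  have k1' : (c * d) * (e * c) + (c * d) * (e * d) = (c * d) * (e * d) := by
    have t : d * (e * (c * c)) + d * (e * (c * d)) = d * (e * (c * d)) := k1
    calc (c * d) * (e * c) + (c * d) * (e * d)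
        = d * (e * (c * c)) + d * (e * (c * d)) := by ring
      _ = d * (e * (c * d)) := t
      _ = (c * d) * (e * d) := by ring
  have k2' : (c * d) * (e * d) + (c * d) * (e * c) = (c * d) * (e * c) := by
    have t : c * (e * (d * d)) + c * (e * (c * d)) = c * (e * (c * d)) := k2
    calc (c * d) * (e * d) + (c * d) * (e * c)
        = c * (e * (d * d)) + c * (e * (c * d)) := by ring
      _ = c * (e * (c * d)) := t
      _ = (c * d) * (e * c) := by ring
  have hcd : c * d ≠ 0 := fun hX => (hzd c d hX).elim hc hd
  have hanti : (c * d) * (e * c) = (c * d) * (e * d) := by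
    calc (c * d) * (e * c) = (c * d) * (e * d) + (c * d) * (e * c) := k2'.symm
      _ = (c * d) * (e * c) + (c * d) * (e * d) := by ring
      _ = (c * d) * (e * d) := k1'
  have heq : e * c = e * d := aux_cancel e inv hinv (hP c) (hP d) hcd hanti
  have hcd2 : e * (c * d) = e * (d * d) := by
    calc e * (c * d) = (e * c) * d := by ring
      _ = (e * d) * d := by rw [heq]
      _ = e * (d * d) := by ring
  have hdd : e * (d * d) + e * (d * d) = e * (d * d) := by
    rcases hbip (d * d) (d * d) with h3 | h3 <;> exact h3
  rw [hcd2]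
  calc e * (d * d) + (e * (c * c) + e * (d * d))
      = e * (c * c) + (e * (d * d) + e * (d * d)) := by ring
    _ = e * (c * c) + e * (d * d) := by rw [hdd]

lemma aux_esq (e : R) (inv : R → R)
    (hinv : ∀ a : R, a ≠ 0 → e * inv a = inv a ∧ e * a * inv a = e)
    (hzd : ∀ a b : R, a * b = 0 → a = 0 ∨ b = 0)
    (hbip : ∀ a b : R, e * a + e * b = e * a ∨ e * a + e * b = e * b)
    (hee : e * e = e) (c d : R) :
    e * ((c + d) * (c + d)) = e * (c * c) + e * (d * d) := by
  have h1 : e * ((c + d) * (c + d)) = (e * (c * d) + e * (c * d)) + (e * (c * c) + e * (d * d)) := by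
    ring
  have h2 : e * (c * d) + e * (c * d) = e * (c * d) := by
    rcases hbip (c * d) (c * d) with h | h <;> exact h
  rw [h1, h2]
  exact aux_cross e inv hinv hzd hbip hee c d

variable {V : Type*} [AddCommMonoid V] [Module R V]

lemma aux_CS_smul (e : R) (inv : R → R)
    (hinv : ∀ a : R, a ≠ 0 → e * inv a = inv a ∧ e * a * inv a = e)
    (hzd : ∀ a b : R, a * b = 0 → a = 0 ∨ b = 0)
    (q : V → R) (bf : V → V → R)
    (hq : ∀ (a : R) (x : V), q (a • x) = a ^ 2 * q x)
    (hbs : ∀ (a : R) (x y : V), bf (a • x) y = a * bf x y)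
    {m : R} {x u : V} (hm : m ≠ 0) (hqx : q x ≠ 0) (hqu : q u ≠ 0) :
    CS e inv q bf (m • x) u = CS e inv q bf x u := by
  have hmm : m * m ≠ 0 := fun h => (hzd m m h).elim hm hm
  have hqxu : q x * q u ≠ 0 := fun h => (hzd _ _ h).elim hqx hqu
  have e1 : q (m • x) * q u = (m * m) * (q x * q u) := by rw [hq]; ring
  have h6 := (hinv (m * m) hmm).2
  simp only [CS]
  rw [hbs, e1, aux_invmul e inv hinv hzd hmm hqxu]
  calc e * ((m * bf x u) * (m * bf x u)) * (inv (m * m) * inv (q x * q u))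
      = (e * (m * m) * inv (m * m)) * ((bf x u * bf x u) * inv (q x * q u)) := by ring
    _ = e * ((bf x u * bf x u) * inv (q x * q u)) := by rw [h6]
    _ = e * (bf x u * bf x u) * inv (q x * q u) := by ring

lemma aux_CS_formula (e : R) (inv : R → R)
    (hinv : ∀ a : R, a ≠ 0 → e * inv a = inv a ∧ e * a * inv a = e)
    (hzd : ∀ a b : R, a * b = 0 → a = 0 ∨ b = 0)
    (hbip : ∀ a b : R, e * a + e * b = e * a ∨ e * a + e * b = e * b)
    (hee : e * e = e)
    (q : V → R) (bf : V → V → R)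
    (hba : ∀ x y z : V, bf (x + y) z = bf x z + bf y z)
    (hbs : ∀ (a : R) (x y : V), bf (a • x) y = a * bf x y)
    (l m : R) (x y u : V)
    (hqz : q (l • x + m • y) ≠ 0) (hqx : q x ≠ 0) (hqy : q y ≠ 0) (hqu : q u ≠ 0) :
    CS e inv q bf (l • x + m • y) u
      = (e * (l * l) * q x * inv (q (l • x + m • y))) * CS e inv q bf x u
        + (e * (m * m) * q y * inv (q (l • x + m • y))) * CS e inv q bf y u := by
  have hb1 : bf (l • x + m • y) u = l * bf x u + m * bf y u := by
    rw [hba, hbs, hbs]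
  have hnum := aux_esq e inv hinv hzd hbip hee (l * bf x u) (m * bf y u)
  have hqzu : inv (q (l • x + m • y) * q u) = inv (q (l • x + m • y)) * inv (q u) :=
    aux_invmul e inv hinv hzd hqz hqu
  have hqxu : inv (q x * q u) = inv (q x) * inv (q u) := aux_invmul e inv hinv hzd hqx hqu
  have hqyu : inv (q y * q u) = inv (q y) * inv (q u) := aux_invmul e inv hinv hzd hqy hqu
  have hx' := (hinv (q x) hqx).2
  have hy' := (hinv (q y) hqy).2
  have t1 : (e * (l * l) * q x * inv (q (l • x + m • y))) * (e * (bf x u * bf x u) * (inv (q x) * inv (q u)))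
      = e * ((l * bf x u) * (l * bf x u)) * (inv (q (l • x + m • y)) * inv (q u)) := by
    calc (e * (l * l) * q x * inv (q (l • x + m • y))) * (e * (bf x u * bf x u) * (inv (q x) * inv (q u)))
        = (e * q x * inv (q x)) * (e * (((l * bf x u) * (l * bf x u)) * (inv (q (l • x + m • y)) * inv (q u)))) := by ring
      _ = e * (e * (((l * bf x u) * (l * bf x u)) * (inv (q (l • x + m • y)) * inv (q u)))) := by rw [hx']
      _ = (e * e) * (((l * bf x u) * (l * bf x u)) * (inv (q (l • x + m • y)) * inv (q u))) := by ring
      _ = e * (((l * bf x u) * (l * bf x u)) * (inv (q (l • x + m • y)) * inv (q u))) := by rw [hee]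
      _ = e * ((l * bf x u) * (l * bf x u)) * (inv (q (l • x + m • y)) * inv (q u)) := by ring
  have t2 : (e * (m * m) * q y * inv (q (l • x + m • y))) * (e * (bf y u * bf y u) * (inv (q y) * inv (q u)))
      = e * ((m * bf y u) * (m * bf y u)) * (inv (q (l • x + m • y)) * inv (q u)) := by
    calc (e * (m * m) * q y * inv (q (l • x + m • y))) * (e * (bf y u * bf y u) * (inv (q y) * inv (q u)))
        = (e * q y * inv (q y)) * (e * (((m * bf y u) * (m * bf y u)) * (inv (q (l • x + m • y)) * inv (q u)))) := by ring
      _ = e * (e * (((m * bf y u) * (m * bf y u)) * (inv (q (l • x + m • y)) * inv (q u)))) := by rw [hy']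
      _ = (e * e) * (((m * bf y u) * (m * bf y u)) * (inv (q (l • x + m • y)) * inv (q u))) := by ring
      _ = e * (((m * bf y u) * (m * bf y u)) * (inv (q (l • x + m • y)) * inv (q u))) := by rw [hee]
      _ = e * ((m * bf y u) * (m * bf y u)) * (inv (q (l • x + m • y)) * inv (q u)) := by ring
  simp only [CS]
  rw [hb1, hqzu, hqxu, hqyu, hnum, t1, t2]
  ring

end Aux

/-- the locus of rays `W` satisfying a finite conjunction of linear
CS-(in)equalities (with relations among `<`, `≤`, `=`) is convex in the ray space. -/
theorem statement3 {R V : Type*} [CommSemiring R] [AddCommMonoid V] [Module R V]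
    (e : R) (he : e = 1 + 1)
    (hst : ∀ a b : R, (e * a ≠ e * b → a + b = a ∨ a + b = b) ∧ (e * a = e * b → a + b = e * a))
    (hzd : ∀ a b : R, a * b = 0 → a = 0 ∨ b = 0)
    (hbip : ∀ a b : R, e * a + e * b = e * a ∨ e * a + e * b = e * b)
    (inv : R → R)
    (hinv : ∀ a : R, a ≠ 0 → e * inv a = inv a ∧ e * a * inv a = e)
    (hmod : ∀ (c : R) (x : V), c • x = 0 → c = 0 ∨ x = 0)
    (q : V → R) (bf : V → V → R)
    (hq : ∀ (a : R) (x : V), q (a • x) = a ^ 2 * q x)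
    (hba : ∀ x y z : V, bf (x + y) z = bf x z + bf y z)
    (hbs : ∀ (a : R) (x y : V), bf (a • x) y = a * bf x y)
    (hbsymm : ∀ x y : V, bf x y = bf y x)
    (hcomp : ∀ x y : V, q (x + y) = q x + q y + bf x y)
    (han : ∀ x : V, q x = 0 → x = 0)
    (n k : ℕ) (y : Fin n → V) (hy : ∀ j, y j ≠ 0)
    (gam del : Fin k → Fin n → R)
    (hgam : ∀ i j, e * gam i j = gam i j) (hdel : ∀ i j, e * del i j = del i j)
    (rel : Fin k → (R → R → Prop))
    (hrel : ∀ i, rel i = rlt ∨ rel i = rle ∨ rel i = fun a b => a = b) :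
    RayConvex R {S | ∃ u : V, u ≠ 0 ∧ S = ray R u ∧
      ∀ i : Fin k, rel i (∑ j, gam i j * CS e inv q bf u (y j))
                         (∑ j, del i j * CS e inv q bf u (y j))} := by
  intro w₁ w₂ hw₁ hw₂ hA₁ hA₂ S hS
  obtain ⟨l, m, hz, rfl⟩ := hS
  by_cases hE : e = 0
  · exfalso
    have h1 : (1 : R) + 0 = e * 1 := (hst 1 0).2 (by rw [hE, zero_mul, zero_mul])
    have h10 : (1 : R) = 0 := by rwa [add_zero, hE, zero_mul] at h1
    exact hw₁ (by rw [← one_smul R w₁, h10, zero_smul])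
  -- basic consequences
  have h1ne : (1 : R) ≠ 0 := fun h => hE (by rw [he, h, add_zero])
  have hmulne : ∀ a b : R, a ≠ 0 → b ≠ 0 → a * b ≠ 0 :=
    fun a b ha hb h => (hzd a b h).elim ha hb
  have hinvne : ∀ a : R, a ≠ 0 → inv a ≠ 0 :=
    fun a ha h => hE (by rw [← (hinv a ha).2, h, mul_zero])
  have hqne : ∀ v : V, v ≠ 0 → q v ≠ 0 := fun v hv h => hv (han v h)
  have hepe : e + e = e := by rcases hbip 1 1 with h | h <;> simpa using h
  have hee : e * e = e := ((hst e e).2 rfl).symm.trans hepe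
  have hray_smul : ∀ (c : R) (v : V), c ≠ 0 → ray R (c • v) = ray R v := by
    intro c v hc
    ext w
    simp only [ray, Set.mem_setOf_eq]
    constructor
    · rintro ⟨hw, l1, m1, hl1, hm1, hweq⟩
      exact ⟨hw, l1 * c, m1, hmulne l1 c hl1 hc, hm1, by rw [mul_smul]; exact hweq⟩
    · rintro ⟨hw, l1, m1, hl1, hm1, hweq⟩
      refine ⟨hw, l1, m1 * c, hl1, hmulne m1 c hm1 hc, ?_⟩
      rw [smul_smul, mul_comm l1 c, ← smul_smul, hweq, smul_smul, mul_comm c m1]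
  by_cases hl : l = 0
  · have hm0 : m ≠ 0 := fun h => hz (by rw [hl, h, zero_smul, zero_smul, add_zero])
    have hzy : l • w₁ + m • w₂ = m • w₂ := by rw [hl, zero_smul, zero_add]
    show ray R (l • w₁ + m • w₂) ∈ _
    rw [hzy, hray_smul m w₂ hm0]
    exact hA₂
  by_cases hm : m = 0
  · have hzx : l • w₁ + m • w₂ = l • w₁ := by rw [hm, zero_smul, add_zero]
    show ray R (l • w₁ + m • w₂) ∈ _
    rw [hzx, hray_smul l w₁ hl]
    exact hA₁
  -- main case
  have hCSray : ∀ u u' : V, u ≠ 0 → u' ≠ 0 → ray R u = ray R u' → ∀ w : V, w ≠ 0 →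
      CS e inv q bf u w = CS e inv q bf u' w := by
    intro u u' hu hu' hray w hw
    have hmem : u ∈ ray R u' := by
      rw [← hray]
      exact ⟨hu, 1, 1, h1ne, h1ne, rfl⟩
    obtain ⟨-, l0, m0, hl0, hm0, hlm⟩ := hmem
    have h1 : CS e inv q bf (m0 • u) w = CS e inv q bf u w :=
      aux_CS_smul e inv hinv hzd q bf hq hbs hm0 (hqne u hu) (hqne w hw)
    have h2 : CS e inv q bf (l0 • u') w = CS e inv q bf u' w :=
      aux_CS_smul e inv hinv hzd q bf hq hbs hl0 (hqne u' hu') (hqne w hw)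
    rw [← h1, ← hlm, h2]
  obtain ⟨x', hx'0, hxe, hcx'⟩ := hA₁
  obtain ⟨y', hy'0, hye, hcy'⟩ := hA₂
  have hcx : ∀ i : Fin k, rel i (∑ j, gam i j * CS e inv q bf w₁ (y j))
      (∑ j, del i j * CS e inv q bf w₁ (y j)) := by
    intro i
    have hsg : ∑ j, gam i j * CS e inv q bf w₁ (y j)
        = ∑ j, gam i j * CS e inv q bf x' (y j) :=
      Finset.sum_congr rfl fun j _ => by rw [hCSray w₁ x' hw₁ hx'0 hxe (y j) (hy j)]
    have hsd : ∑ j, del i j * CS e inv q bf w₁ (y j)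
        = ∑ j, del i j * CS e inv q bf x' (y j) :=
      Finset.sum_congr rfl fun j _ => by rw [hCSray w₁ x' hw₁ hx'0 hxe (y j) (hy j)]
    rw [hsg, hsd]
    exact hcx' i
  have hcy : ∀ i : Fin k, rel i (∑ j, gam i j * CS e inv q bf w₂ (y j))
      (∑ j, del i j * CS e inv q bf w₂ (y j)) := by
    intro i
    have hsg : ∑ j, gam i j * CS e inv q bf w₂ (y j)
        = ∑ j, gam i j * CS e inv q bf y' (y j) :=
      Finset.sum_congr rfl fun j _ => by rw [hCSray w₂ y' hw₂ hy'0 hye (y j) (hy j)]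
    have hsd : ∑ j, del i j * CS e inv q bf w₂ (y j)
        = ∑ j, del i j * CS e inv q bf y' (y j) :=
      Finset.sum_congr rfl fun j _ => by rw [hCSray w₂ y' hw₂ hy'0 hye (y j) (hy j)]
    rw [hsg, hsd]
    exact hcy' i
  have hqz : q (l • w₁ + m • w₂) ≠ 0 := hqne _ hz
  have hqx : q w₁ ≠ 0 := hqne w₁ hw₁
  have hqy : q w₂ ≠ 0 := hqne w₂ hw₂
  set s : R := e * (l * l) * q w₁ * inv (q (l • w₁ + m • w₂)) with hs_def
  set t : R := e * (m * m) * q w₂ * inv (q (l • w₁ + m • w₂)) with ht_def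
  have hform : ∀ j : Fin n, CS e inv q bf (l • w₁ + m • w₂) (y j)
      = s * CS e inv q bf w₁ (y j) + t * CS e inv q bf w₂ (y j) := fun j =>
    aux_CS_formula e inv hinv hzd hbip hee q bf hba hbs l m w₁ w₂ (y j) hqz hqx hqy
      (hqne (y j) (hy j))
  have hs0 : s ≠ 0 :=
    hmulne _ _ (hmulne _ _ (hmulne e (l * l) hE (hmulne l l hl hl)) hqx) (hinvne _ hqz)
  have ht0 : t ≠ 0 :=
    hmulne _ _ (hmulne _ _ (hmulne e (m * m) hE (hmulne m m hm hm)) hqy) (hinvne _ hqz)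
  have hPs : e * s = s := by
    rw [hs_def]
    calc e * (e * (l * l) * q w₁ * inv (q (l • w₁ + m • w₂)))
        = (e * e) * ((l * l) * (q w₁ * inv (q (l • w₁ + m • w₂)))) := by ring
      _ = e * ((l * l) * (q w₁ * inv (q (l • w₁ + m • w₂)))) := by rw [hee]
      _ = e * (l * l) * q w₁ * inv (q (l • w₁ + m • w₂)) := by ring
  have hPt : e * t = t := by
    rw [ht_def]
    calc e * (e * (m * m) * q w₂ * inv (q (l • w₁ + m • w₂)))
        = (e * e) * ((m * m) * (q w₂ * inv (q (l • w₁ + m • w₂)))) := by ring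
      _ = e * ((m * m) * (q w₂ * inv (q (l • w₁ + m • w₂)))) := by rw [hee]
      _ = e * (m * m) * q w₂ * inv (q (l • w₁ + m • w₂)) := by ring
  have hPsum : ∀ (co : Fin n → R), (∀ j, e * co j = co j) → ∀ v : V,
      e * (∑ j, co j * CS e inv q bf v (y j)) = ∑ j, co j * CS e inv q bf v (y j) := by
    intro co hco v
    rw [Finset.mul_sum]
    exact Finset.sum_congr rfl fun j _ => by rw [← mul_assoc, hco j]
  have hsum : ∀ co : Fin n → R,
      (∑ j, co j * CS e inv q bf (l • w₁ + m • w₂) (y j))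
        = s * (∑ j, co j * CS e inv q bf w₁ (y j))
          + t * (∑ j, co j * CS e inv q bf w₂ (y j)) := by
    intro co
    rw [Finset.mul_sum, Finset.mul_sum, ← Finset.sum_add_distrib]
    exact Finset.sum_congr rfl fun j _ => by rw [hform j]; ring
  refine ⟨l • w₁ + m • w₂, hz, rfl, ?_⟩
  intro i
  have hcxi := hcx i
  have hcyi := hcy i
  rw [hsum (gam i), hsum (del i)]
  rcases hrel i with hri | hri | hri
  · rw [hri] at hcxi hcyi ⊢
    exact aux_rlt_add e hbip (by rw [← mul_assoc, hPs]) (by rw [← mul_assoc, hPs])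
      (by rw [← mul_assoc, hPt]) (by rw [← mul_assoc, hPt])
      (aux_rlt_mul e inv hinv (hPsum (gam i) (hgam i) w₁) (hPsum (del i) (hdel i) w₁) hs0 hcxi)
      (aux_rlt_mul e inv hinv (hPsum (gam i) (hgam i) w₂) (hPsum (del i) (hdel i) w₂) ht0 hcyi)
  · rw [hri] at hcxi hcyi ⊢
    exact aux_rle_add (aux_rle_mul s hcxi) (aux_rle_mul t hcyi)
  · rw [hri] at hcxi hcyi ⊢
    rw [hcxi, hcyi]

end SupertropicalCS
end

section
/- Let x, y ∈ V ∖ {0} and assume e·q(x + y) = e·q(y). Then: (a) for every w ∈ V ∖ {0}, CS(w, y) ≤ CS(w, x + y); (b) if moreover q(y) ∈ eR, then q(x + y) = q(y). -/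
namespace SupertropicalCS

/-- if `e·q(x+y) = e·q(y)` then `CS(w,y) ≤ CS(w,x+y)` for all nonzero `w`,
and if moreover `q(y) ∈ eR` then `q(x+y) = q(y)`. -/
theorem statement4 {R V : Type*} [CommSemiring R] [AddCommMonoid V] [Module R V]
    (e : R) (he : e = 1 + 1)
    (hst : ∀ a b : R, (e * a ≠ e * b → a + b = a ∨ a + b = b) ∧ (e * a = e * b → a + b = e * a))
    (hzd : ∀ a b : R, a * b = 0 → a = 0 ∨ b = 0)
    (hbip : ∀ a b : R, e * a + e * b = e * a ∨ e * a + e * b = e * b)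
    (inv : R → R)
    (hinv : ∀ a : R, a ≠ 0 → e * inv a = inv a ∧ e * a * inv a = e)
    (hmod : ∀ (c : R) (x : V), c • x = 0 → c = 0 ∨ x = 0)
    (q : V → R) (bf : V → V → R)
    (hq : ∀ (a : R) (x : V), q (a • x) = a ^ 2 * q x)
    (hba : ∀ x y z : V, bf (x + y) z = bf x z + bf y z)
    (hbs : ∀ (a : R) (x y : V), bf (a • x) y = a * bf x y)
    (hbsymm : ∀ x y : V, bf x y = bf y x)
    (hcomp : ∀ x y : V, q (x + y) = q x + q y + bf x y)
    (han : ∀ x : V, q x = 0 → x = 0)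
    (x y : V) (hx : x ≠ 0) (hy : y ≠ 0)
    (h : e * q (x + y) = e * q y) :
    (∀ w : V, w ≠ 0 → rle (CS e inv q bf w y) (CS e inv q bf w (x + y))) ∧
    (e * q y = q y → q (x + y) = q y) := by
  have hee : e + e = e := by
    have := hbip 1 1
    simpa using this.elim id id
  have heE : e * e = e := by
    nth_rewrite 2 [he]
    rw [mul_add, mul_one, hee]
  have hqy : q y ≠ 0 := fun h0 => hy (han y h0)
  have hne : e ≠ 0 := by
    intro h0
    have h1 : (1 : R) = 0 := by
      have := (hst 1 0).2 (by rw [h0, zero_mul, zero_mul])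
      rw [add_zero, h0, zero_mul] at this
      exact this
    exact hqy (by rw [← mul_one (q y), h1, mul_zero])
  have hqxy : q (x + y) ≠ 0 := by
    intro h0
    rw [h0, mul_zero] at h
    exact (hzd _ _ h.symm).elim hne hqy
  have hadd : ∀ a : R, e * a + e * a = e * a := fun a => by
    have := (hst (e * a) (e * a)).2 rfl
    rw [this, ← mul_assoc, heE]
  have hinveq : ∀ a a' : R, a ≠ 0 → a' ≠ 0 → e * a = e * a' → inv a = inv a' := by
    intro a a' ha ha' hE
    have h1 := hinv a ha
    have h2 := hinv a' ha'
    calc inv a = e * inv a := h1.1.symm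
      _ = (e * a' * inv a') * inv a := by rw [h2.2]
      _ = (e * a * inv a) * inv a' := by rw [hE]; ring
      _ = e * inv a' := by rw [h1.2]
      _ = inv a' := h2.1
  constructor
  · intro w hw
    have hqw : q w ≠ 0 := fun h0 => hw (han w h0)
    have hd1 : q w * q y ≠ 0 := fun h0 => (hzd _ _ h0).elim hqw hqy
    have hd2 : q w * q (x + y) ≠ 0 := fun h0 => (hzd _ _ h0).elim hqw hqxy
    have hdeq : inv (q w * q y) = inv (q w * q (x + y)) := by
      apply hinveq _ _ hd1 hd2
      calc e * (q w * q y) = q w * (e * q y) := by ring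
        _ = q w * (e * q (x + y)) := by rw [h]
        _ = e * (q w * q (x + y)) := by ring
    have hbw : bf w (x + y) = bf w x + bf w y := by
      rw [hbsymm w (x + y), hba, hbsymm x w, hbsymm y w]
    have key : ∀ β γ : R, e * (γ * γ) + e * ((β + γ) * (β + γ))
        = e * ((β + γ) * (β + γ)) := by
      intro β γ
      calc e * (γ * γ) + e * ((β + γ) * (β + γ))
          = (e * (γ * γ) + e * (γ * γ)) + (e * (β * β) + e * (β * γ) + e * (γ * β)) := by
            ring
        _ = e * (γ * γ) + (e * (β * β) + e * (β * γ) + e * (γ * β)) := by rw [hadd]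
        _ = e * ((β + γ) * (β + γ)) := by ring
    show CS e inv q bf w y + CS e inv q bf w (x + y) = CS e inv q bf w (x + y)
    unfold CS
    rw [hdeq, hbw, ← add_mul, key]
  · intro hgy
    have hsplit : q (x + y) = (q x + bf x y) + q y := by rw [hcomp]; ring
    set s := q x + bf x y with hs
    by_cases heq : e * s = e * q y
    · rw [hsplit, (hst s (q y)).2 heq, heq, hgy]
    · rcases (hst s (q y)).1 heq with h1 | h1
      · exfalso
        apply heq
        rw [← h]
        rw [hsplit, h1]
      · rw [hsplit, h1]

end SupertropicalCS
end

section
/- For any nonempty subset C of Ray(V), both the polar C^⊥ and its complement Ray(V) ∖ C^⊥ are convex subsets of Ray(V). -/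
namespace SupertropicalCS

/-- the polar `C^⊥` and its complement `Ray(V) ∖ C^⊥` are convex. -/
theorem statement6 {R V : Type*} [CommSemiring R] [AddCommMonoid V] [Module R V]
    (e : R) (he : e = 1 + 1)
    (hst : ∀ a b : R, (e * a ≠ e * b → a + b = a ∨ a + b = b) ∧ (e * a = e * b → a + b = e * a))
    (hzd : ∀ a b : R, a * b = 0 → a = 0 ∨ b = 0)
    (hbip : ∀ a b : R, e * a + e * b = e * a ∨ e * a + e * b = e * b)
    (hgrp : ∀ a : R, a ≠ 0 → ∃ c : R, e * c = c ∧ e * a * c = e)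
    (hmod : ∀ (c : R) (x : V), c • x = 0 → c = 0 ∨ x = 0)
    (q : V → R) (bf : V → V → R)
    (hq : ∀ (a : R) (x : V), q (a • x) = a ^ 2 * q x)
    (hba : ∀ x y z : V, bf (x + y) z = bf x z + bf y z)
    (hbs : ∀ (a : R) (x y : V), bf (a • x) y = a * bf x y)
    (hbsymm : ∀ x y : V, bf x y = bf y x)
    (hcomp : ∀ x y : V, q (x + y) = q x + q y + bf x y)
    (C : Set (Set V)) (hCne : C.Nonempty) (hCsub : C ⊆ Rays R V) :
    RayConvex R (polar R bf C) ∧ RayConvex R (Rays R V \ polar R bf C) := by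
  classical
  -- expansion of bf on combinations
  have hexp : ∀ (lam mu : R) (x y z : V),
      bf (lam • x + mu • y) z = lam * bf x z + mu * bf y z := by
    intro lam mu x y z
    rw [hba, hbs, hbs]
  -- from a nonzero vector, 1 ≠ 0 in R
  have h1 : ∀ x : V, x ≠ 0 → (1 : R) ≠ 0 := by
    intro x hx h
    apply hx
    calc x = (1 : R) • x := (one_smul R x).symm
      _ = (0 : R) • x := by rw [h]
      _ = 0 := zero_smul R x
  -- from a nonzero vector, e ≠ 0
  have he0 : ∀ x : V, x ≠ 0 → e ≠ 0 := by
    intro x hx h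
    apply h1 x hx
    have h2 := (hst 1 0).2 (by rw [h, zero_mul, zero_mul])
    rw [h, zero_mul, add_zero] at h2
    exact h2
  -- a + b = 0 → a = 0 ∧ b = 0
  have hsum : ∀ x : V, x ≠ 0 → ∀ a b : R, a + b = 0 → a = 0 ∧ b = 0 := by
    intro x hx a b hab
    by_cases h : e * a = e * b
    · have h2 := (hst a b).2 h
      rw [hab] at h2
      have ha : a = 0 := by
        rcases hzd e a h2.symm with h' | h'
        · exact absurd h' (he0 x hx)
        · exact h'
      refine ⟨ha, ?_⟩
      have hb0 : e * b = 0 := by rw [← h, ha, mul_zero]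
      rcases hzd e b hb0 with h' | h'
      · exact absurd h' (he0 x hx)
      · exact h'
    · rcases (hst a b).1 h with h' | h'
      · have ha : a = 0 := by rw [← h', hab]
        have hb : b = 0 := by
          have : b = a + b := by rw [ha, zero_add]
          rw [this, hab]
        exact ⟨ha, hb⟩
      · have hb : b = 0 := by rw [← h', hab]
        have ha : a = 0 := by
          have : a = a + b := by rw [hb, add_zero]
          rw [this, hab]
        exact ⟨ha, hb⟩
  -- if w ∈ ray x then bf x z ≠ 0 ↔ bf w z ≠ 0 (we need both directions)
  have hray : ∀ (w x z : V), w ∈ ray R x → bf w z ≠ 0 → bf x z ≠ 0 := by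
    intro w x z hw hwz hxz
    obtain ⟨hw0, α, β, hα, hβ, hab⟩ := hw
    have := congrArg (fun v => bf v z) hab
    simp only [hbs] at this
    rw [hxz, mul_zero] at this
    rcases hzd β (bf w z) this.symm with h' | h'
    · exact hβ h'
    · exact hwz h'
  constructor
  · -- polar is convex
    intro x y hx hy hxp hyp S hS
    obtain ⟨lam, mu, hne, rfl⟩ := hS
    refine ⟨⟨_, hne, rfl⟩, ?_⟩
    intro w hw z hz hzC
    obtain ⟨hw0, α, β, hα, hβ, hab⟩ := hw
    have hxz : bf x z = 0 :=
      hxp.2 x ⟨hx, 1, 1, h1 x hx, h1 x hx, rfl⟩ z hz hzC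
    have hyz : bf y z = 0 :=
      hyp.2 y ⟨hy, 1, 1, h1 y hy, h1 y hy, rfl⟩ z hz hzC
    have := congrArg (fun v => bf v z) hab
    simp only [hbs, hexp, hxz, hyz, mul_zero, add_zero, zero_add] at this
    rcases hzd β (bf w z) this.symm with h' | h'
    · exact absurd h' hβ
    · exact h'
  · -- the complement of the polar is convex
    intro x y hx hy hxm hym S hS
    obtain ⟨lam, mu, hne, rfl⟩ := hS
    refine ⟨⟨_, hne, rfl⟩, ?_⟩
    intro hpol
    -- extract witnesses from ray x ∉ polar and ray y ∉ polar
    have hxw : ∃ z : V, z ≠ 0 ∧ ray R z ∈ C ∧ bf x z ≠ 0 := by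
      have hnp := hxm.2
      by_contra hc
      push_neg at hc
      apply hnp
      refine ⟨⟨x, hx, rfl⟩, ?_⟩
      intro w hw z hz hzC
      by_contra hwz
      exact hray w x z hw hwz (hc z hz hzC)
    have hyw : ∃ z : V, z ≠ 0 ∧ ray R z ∈ C ∧ bf y z ≠ 0 := by
      have hnp := hym.2
      by_contra hc
      push_neg at hc
      apply hnp
      refine ⟨⟨y, hy, rfl⟩, ?_⟩
      intro w hw z hz hzC
      by_contra hwz
      exact hray w y z hw hwz (hc z hz hzC)
    obtain ⟨z, hz, hzC, hxz⟩ := hxw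
    obtain ⟨z', hz', hz'C, hyz'⟩ := hyw
    have hmem : (lam • x + mu • y) ∈ ray R (lam • x + mu • y) :=
      ⟨hne, 1, 1, h1 _ hne, h1 _ hne, rfl⟩
    by_cases hlam : lam = 0
    · -- then mu ≠ 0; use z'
      have hmu : mu ≠ 0 := by
        intro h
        apply hne
        rw [hlam, h, zero_smul, zero_smul, add_zero]
      have h0 : bf (lam • x + mu • y) z' = 0 := hpol.2 _ hmem z' hz' hz'C
      rw [hexp] at h0
      have := (hsum x hx _ _ h0).2
      rcases hzd mu (bf y z') this with h' | h'
      · exact hmu h'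
      · exact hyz' h'
    · -- lam ≠ 0; use z
      have h0 : bf (lam • x + mu • y) z = 0 := hpol.2 _ hmem z hz hzC
      rw [hexp] at h0
      have := (hsum x hx _ _ h0).1
      rcases hzd lam (bf x z) this with h' | h'
      · exact hlam h'
      · exact hxz h'

end SupertropicalCS
end

section
/- Let W₁, W₂, X, Y be rays in V with W₁ ∉ {X, Y}^⊥ and W₂ ∉ {X, Y}^⊥. Then: (a) [W₁, W₂] ∩ {X, Y}^⊥ = ∅, so the W-median M_W(X, Y) is defined for every W ∈ [W₁, W₂]; (b) for every W ∈ [W₁, W₂], M_W(X, Y) ∈ [M_{W₁}(X, Y), M_{W₂}(X, Y)]. -/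
namespace SupertropicalCS

/-- if `W₁, W₂ ∉ {X,Y}^⊥` then (a) `[W₁,W₂]` is disjoint from `{X,Y}^⊥`
(so all medians are defined), and (b) for `W ∈ [W₁,W₂]` one has
`M_W(X,Y) ∈ [M_{W₁}(X,Y), M_{W₂}(X,Y)]`. -/
theorem statement7 {R V : Type*} [CommSemiring R] [AddCommMonoid V] [Module R V]
    (e : R) (he : e = 1 + 1)
    (hst : ∀ a b : R, (e * a ≠ e * b → a + b = a ∨ a + b = b) ∧ (e * a = e * b → a + b = e * a))
    (hzd : ∀ a b : R, a * b = 0 → a = 0 ∨ b = 0)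
    (hbip : ∀ a b : R, e * a + e * b = e * a ∨ e * a + e * b = e * b)
    (hgrp : ∀ a : R, a ≠ 0 → ∃ c : R, e * c = c ∧ e * a * c = e)
    (hmod : ∀ (c : R) (x : V), c • x = 0 → c = 0 ∨ x = 0)
    (q : V → R) (bf : V → V → R)
    (hq : ∀ (a : R) (x : V), q (a • x) = a ^ 2 * q x)
    (hba : ∀ x y z : V, bf (x + y) z = bf x z + bf y z)
    (hbs : ∀ (a : R) (x y : V), bf (a • x) y = a * bf x y)
    (hbsymm : ∀ x y : V, bf x y = bf y x)
    (hcomp : ∀ x y : V, q (x + y) = q x + q y + bf x y)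
    (w1 w2 x y : V) (hw1 : w1 ≠ 0) (hw2 : w2 ≠ 0) (hx : x ≠ 0) (hy : y ≠ 0)
    (h1 : ray R w1 ∉ polar R bf {ray R x, ray R y})
    (h2 : ray R w2 ∉ polar R bf {ray R x, ray R y}) :
    (∀ S ∈ rayInterval R w1 w2, S ∉ polar R bf {ray R x, ray R y}) ∧
    (∀ lam mu : R, lam • w1 + mu • w2 ≠ 0 →
      ray R (med bf (lam • w1 + mu • w2) x y) ∈
        rayInterval R (med bf w1 x y) (med bf w2 x y)) := by
  have h10 : (1 : R) ≠ 0 := fun h => hw1 (by rw [← one_smul R w1, h, zero_smul])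
  have he0 : e ≠ 0 := by
    intro h
    have h2' := (hst 1 0).2 (by rw [h, zero_mul, zero_mul])
    rw [h, zero_mul, add_zero] at h2'
    exact h10 h2'
  have hsum0 : ∀ a b : R, a + b = 0 → a = 0 ∧ b = 0 := by
    intro a b hab
    by_cases hc : e * a = e * b
    · have h' := (hst a b).2 hc
      rw [hab] at h'
      rcases hzd e a h'.symm with h | h
      · exact absurd h he0
      · refine ⟨h, ?_⟩
        have hb : b = a + b := by rw [h, zero_add]
        rw [hb, hab]
    · rcases (hst a b).1 hc with h | h
      · have ha : a = 0 := by rw [← h, hab]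
        have hb : b = 0 := by
          have : b = a + b := by rw [ha, zero_add]
          rw [this, hab]
        exact ⟨ha, hb⟩
      · have hb : b = 0 := by rw [← h, hab]
        have ha : a = 0 := by
          have : a = a + b := by rw [hb, add_zero]
          rw [this, hab]
        exact ⟨ha, hb⟩
  have hrefl : ∀ v : V, v ≠ 0 → v ∈ ray R v := fun v hv => ⟨hv, 1, 1, h10, h10, rfl⟩
  have hscale : ∀ w u v : V, u ∈ ray R v → bf w v = 0 → bf w u = 0 := by
    intro w u v hu h0
    obtain ⟨hu0, a, b, ha, hb, hab⟩ := hu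
    have key : b * bf w u = a * bf w v := by
      calc b * bf w u = b * bf u w := by rw [hbsymm]
        _ = bf (b • u) w := (hbs b u w).symm
        _ = bf (a • v) w := by rw [hab]
        _ = a * bf v w := hbs a v w
        _ = a * bf w v := by rw [hbsymm]
    rw [h0, mul_zero] at key
    rcases hzd b (bf w u) key with h | h
    · exact absurd h hb
    · exact h
  have hpolar_in : ∀ w : V, w ≠ 0 → bf w x = 0 → bf w y = 0 →
      ray R w ∈ polar R bf {ray R x, ray R y} := by
    intro w hw hwx hwy
    refine ⟨⟨w, hw, rfl⟩, ?_⟩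
    intro w' hw' x' hx' hmem
    have hwx' : bf w x' = 0 := by
      rcases Set.mem_insert_iff.mp hmem with h | h
      · have hmx : x' ∈ ray R x := by rw [← h]; exact hrefl x' hx'
        exact hscale w x' x hmx hwx
      · rw [Set.mem_singleton_iff] at h
        have hmy : x' ∈ ray R y := by rw [← h]; exact hrefl x' hx'
        exact hscale w x' y hmy hwy
    have hxw : bf x' w' = 0 := hscale x' w' w hw' (by rw [hbsymm]; exact hwx')
    rw [hbsymm]; exact hxw
  have hpolar_out : ∀ w : V, w ≠ 0 → ray R w ∉ polar R bf {ray R x, ray R y} →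
      bf w x ≠ 0 ∨ bf w y ≠ 0 := by
    intro w hw hpol
    by_contra hcon
    push_neg at hcon
    exact hpol (hpolar_in w hw hcon.1 hcon.2)
  have partA : ∀ S ∈ rayInterval R w1 w2, S ∉ polar R bf {ray R x, ray R y} := by
    rintro S ⟨lam, mu, hwne, rfl⟩ hpol
    have hwx : bf (lam • w1 + mu • w2) x = 0 :=
      hpol.2 _ (hrefl _ hwne) x hx (Set.mem_insert _ _)
    have hwy : bf (lam • w1 + mu • w2) y = 0 :=
      hpol.2 _ (hrefl _ hwne) y hy (Set.mem_insert_of_mem _ rfl)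
    simp only [hba, hbs] at hwx hwy
    obtain ⟨hx1, hx2⟩ := hsum0 _ _ hwx
    obtain ⟨hy1, hy2⟩ := hsum0 _ _ hwy
    by_cases hlam : lam = 0
    · have hmu : mu ≠ 0 := by
        intro h; apply hwne; rw [hlam, h, zero_smul, zero_smul, add_zero]
      have b2x : bf w2 x = 0 := (hzd _ _ hx2).resolve_left hmu
      have b2y : bf w2 y = 0 := (hzd _ _ hy2).resolve_left hmu
      exact h2 (hpolar_in w2 hw2 b2x b2y)
    · have b1x : bf w1 x = 0 := (hzd _ _ hx1).resolve_left hlam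
      have b1y : bf w1 y = 0 := (hzd _ _ hy1).resolve_left hlam
      exact h1 (hpolar_in w1 hw1 b1x b1y)
  refine ⟨partA, ?_⟩
  intro lam mu hwne
  set w := lam • w1 + mu • w2 with hwdef
  have hnpol : ray R w ∉ polar R bf {ray R x, ray R y} :=
    partA _ ⟨lam, mu, hwne, rfl⟩
  have hor := hpolar_out w hwne hnpol
  have hmedgen : ∀ u : V, bf u x ≠ 0 ∨ bf u y ≠ 0 → med bf u x y ≠ 0 := by
    intro w hor hmed
    have h0 : bf (med bf w x y) w = 0 := by
      rw [hmed, show (0 : V) = (0 : R) • x from (zero_smul R x).symm, hbs, zero_mul]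
    simp only [med, hba, hbs] at h0
    obtain ⟨hA, hB⟩ := hsum0 _ _ h0
    rcases hor with h | h
    · have hby : bf w y = 0 := by
        rcases hzd _ _ hB with h' | h'
        · exact absurd h' h
        · rw [hbsymm]; exact h'
      apply h
      have hm : med bf w x y = bf w x • y := by
        simp only [med, hby, zero_smul, zero_add]
      rw [hm] at hmed
      rcases hmod _ _ hmed with h' | h'
      · exact h'
      · exact absurd h' hy
    · have hbx : bf w x = 0 := by
        rcases hzd _ _ hA with h' | h'
        · exact absurd h' h
        · rw [hbsymm]; exact h'
      apply h
      have hm : med bf w x y = bf w y • x := by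
        simp only [med, hbx, zero_smul, add_zero]
      rw [hm] at hmed
      rcases hmod _ _ hmed with h' | h'
      · exact h'
      · exact absurd h' hx
  have hmedne : med bf w x y ≠ 0 := hmedgen w hor
  have hexp : med bf w x y = lam • med bf w1 x y + mu • med bf w2 x y := by
    simp only [med, hwdef, hba, hbs, add_smul, smul_add, smul_smul]
    abel
  exact ⟨lam, mu, by rw [← hexp]; exact hmedne, by rw [hexp]⟩

end SupertropicalCS
end

section
/- Let W, X, Y be rays in V with W ∉ {X, Y}^⊥, so the W-median M := M_W(X, Y) is defined. Then the function Z ↦ CS(W, Z) from [X, Y] to eR attains its minimal value at M; that is, CS(W, M) ≤ CS(W, Z) for every Z ∈ [X, Y]. -/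
namespace SupertropicalCS

/-- the CS-function `CS(W,−)` on `[X,Y]` attains its minimal value
at the median `M_W(X,Y)`. -/
theorem statement8 {R V : Type*} [CommSemiring R] [AddCommMonoid V] [Module R V]
    (e : R) (he : e = 1 + 1)
    (hst : ∀ a b : R, (e * a ≠ e * b → a + b = a ∨ a + b = b) ∧ (e * a = e * b → a + b = e * a))
    (hzd : ∀ a b : R, a * b = 0 → a = 0 ∨ b = 0)
    (hbip : ∀ a b : R, e * a + e * b = e * a ∨ e * a + e * b = e * b)
    (inv : R → R)
    (hinv : ∀ a : R, a ≠ 0 → e * inv a = inv a ∧ e * a * inv a = e)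
    (hmod : ∀ (c : R) (x : V), c • x = 0 → c = 0 ∨ x = 0)
    (q : V → R) (bf : V → V → R)
    (hq : ∀ (a : R) (x : V), q (a • x) = a ^ 2 * q x)
    (hba : ∀ x y z : V, bf (x + y) z = bf x z + bf y z)
    (hbs : ∀ (a : R) (x y : V), bf (a • x) y = a * bf x y)
    (hbsymm : ∀ x y : V, bf x y = bf y x)
    (hcomp : ∀ x y : V, q (x + y) = q x + q y + bf x y)
    (han : ∀ x : V, q x = 0 → x = 0)
    (w x y : V) (hw : w ≠ 0) (hx : x ≠ 0) (hy : y ≠ 0)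
    (h : ray R w ∉ polar R bf {ray R x, ray R y}) :
    ∀ lam mu : R, lam • x + mu • y ≠ 0 →
      rle (CS e inv q bf w (med bf w x y)) (CS e inv q bf w (lam • x + mu • y)) := by
  intro lam mu hz
  by_cases he0 : e = 0
  · simp [rle, CS, he0]
  have h1 : (1 : R) ≠ 0 := by
    intro h10
    exact hw (by rw [← one_smul R w, h10, zero_smul])
  have headd : e + e = e := by
    have h2 := hbip 1 1
    rw [mul_one] at h2
    exact h2.elim id id
  have hee : e * e = e := ((hst e e).2 rfl).symm.trans headd
  have habs : ∀ a : R, e * a + e * a = e * a := by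
    intro a
    have h2 := (hst (e * a) (e * a)).2 rfl
    rwa [← mul_assoc, hee] at h2
  have habs' : ∀ s t : R, e * s + (e * s + t) = e * s + t := by
    intro s t
    rw [← add_assoc, habs]
  have hle_self_add : ∀ a s : R, e * a + e * (a + s) = e * (a + s) := by
    intro a s
    rw [mul_add]
    exact habs' a (e * s)
  have hmulne : ∀ a b : R, a ≠ 0 → b ≠ 0 → a * b ≠ 0 := fun a b ha hb hab =>
    (hzd a b hab).elim ha hb
  have hsqne : ∀ a : R, a ≠ 0 → a ^ 2 ≠ 0 := by
    intro a ha h2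
    rw [pow_two] at h2
    exact (hzd a a h2).elim ha ha
  have hpos : ∀ a b : R, a ≠ 0 → a + b ≠ 0 := by
    intro a b ha hab
    by_cases hc : e * a = e * b
    · have h2 := (hst a b).2 hc
      rw [hab] at h2
      exact (hzd e a h2.symm).elim he0 ha
    · rcases (hst a b).1 hc with h2 | h2
      · exact ha (h2.symm.trans hab)
      · have hb0 : b = 0 := h2.symm.trans hab
        rw [hb0, add_zero] at hab
        exact ha hab
  have hmulmono : ∀ a b c d : R, e * a + e * b = e * b → e * c + e * d = e * d →
      e * (a * c) + e * (b * d) = e * (b * d) := by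
    intro a b c d hab hcd
    have key : e * (a * c) + (e * (a * d) + (e * (b * c) + e * (b * d))) = e * (b * d) := by
      calc e * (a * c) + (e * (a * d) + (e * (b * c) + e * (b * d)))
          = (e * e) * (a * c) + ((e * e) * (a * d) + ((e * e) * (b * c) + (e * e) * (b * d))) := by
            rw [hee]
        _ = (e * a + e * b) * (e * c + e * d) := by ring
        _ = (e * b) * (e * d) := by rw [hab, hcd]
        _ = e * (b * d) := by
            rw [show (e * b) * (e * d) = (e * e) * (b * d) from by ring, hee]
    calc e * (a * c) + e * (b * d)
        = e * (a * c) + (e * (a * c) + (e * (a * d) + (e * (b * c) + e * (b * d)))) := by rw [key]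
      _ = e * (a * c) + (e * (a * d) + (e * (b * c) + e * (b * d))) := habs' _ _
      _ = e * (b * d) := key
  have hcombine : ∀ p1 p2 p3 t : R, e * p1 + e * t = e * t → e * p2 + e * t = e * t →
      e * p3 + e * t = e * t → e * (p1 + (p2 + p3)) + e * t = e * t := by
    intro p1 p2 p3 t k1 k2 k3
    calc e * (p1 + (p2 + p3)) + e * t
        = e * p1 + (e * p2 + (e * p3 + e * t)) := by ring
      _ = e * p1 + (e * p2 + e * t) := by rw [k3]
      _ = e * p1 + e * t := by rw [k2]
      _ = e * t := k1
  -- bilinearity in the second argument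
  have hba2 : ∀ z u v : V, bf z (u + v) = bf z u + bf z v := by
    intro z u v
    rw [hbsymm, hba, hbsymm u z, hbsymm v z]
  have hbs2 : ∀ (a : R) (u v : V), bf u (a • v) = a * bf u v := by
    intro a u v
    rw [hbsymm, hbs, hbsymm]
  have hbwz : ∀ l m : R, bf w (l • x + m • y) = l * bf w x + m * bf w y := by
    intro l m
    rw [hba2, hbs2, hbs2]
  have hqzf : ∀ l m : R, q (l • x + m • y) = l ^ 2 * q x + m ^ 2 * q y + l * m * bf x y := by
    intro l m
    rw [hcomp, hq, hq, hbs, hbs2]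
    ring
  have hbwm : bf w (med bf w x y) = e * (bf w x * bf w y) := by
    have h2 : bf w (bf w y • x + bf w x • y) = bf w y * bf w x + bf w x * bf w y := hbwz _ _
    have h3 : bf w (med bf w x y) = bf w y * bf w x + bf w x * bf w y := h2
    rw [h3, mul_comm (bf w y) (bf w x)]
    exact (hst _ _).2 rfl
  have hqm : q (med bf w x y)
      = (bf w y) ^ 2 * q x + (bf w x) ^ 2 * q y + bf w y * bf w x * bf x y := hqzf _ _
  -- not both b(w,x), b(w,y) vanish
  have hab : bf w x ≠ 0 ∨ bf w y ≠ 0 := by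
    by_contra hcon
    push_neg at hcon
    apply h
    refine ⟨⟨w, hw, rfl⟩, ?_⟩
    intro w' hw' x' hx' hmem
    obtain ⟨hw'0, l, m, hl, hm, hlm⟩ := hw'
    have main : ∀ v : V, bf w v = 0 → ray R x' = ray R v → bf w' x' = 0 := by
      intro v hbv hrv
      have hx'v : x' ∈ ray R v := by
        rw [← hrv]
        exact ⟨hx', 1, 1, h1, h1, rfl⟩
      obtain ⟨hx'0, l', m', hl', hm', hlm'⟩ := hx'v
      have e1 : bf (l • w) (l' • v) = bf (m • w') (m' • x') := by rw [hlm, hlm']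
      rw [hbs, hbs2, hbs, hbs2, hbv] at e1
      simp only [mul_zero] at e1
      rcases hzd m (m' * bf w' x') e1.symm with h2 | h2
      · exact absurd h2 hm
      rcases hzd m' (bf w' x') h2 with h3 | h3
      · exact absurd h3 hm'
      exact h3
    simp only [Set.mem_insert_iff, Set.mem_singleton_iff] at hmem
    rcases hmem with hm2 | hm2
    · exact main x hcon.1 hm2
    · exact main y hcon.2 hm2
  -- nonvanishing of the relevant quadratic values
  have hqw : q w ≠ 0 := fun h' => hw (han w h')
  have hqx : q x ≠ 0 := fun h' => hx (han x h')
  have hqy : q y ≠ 0 := fun h' => hy (han y h')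
  have hQM : (bf w y) ^ 2 * q x + (bf w x) ^ 2 * q y + bf w y * bf w x * bf x y ≠ 0 := by
    rcases hab with hal | hbe
    · rw [show (bf w y) ^ 2 * q x + (bf w x) ^ 2 * q y + bf w y * bf w x * bf x y
          = (bf w x) ^ 2 * q y + ((bf w y) ^ 2 * q x + bf w y * bf w x * bf x y) from by ring]
      exact hpos _ _ (hmulne _ _ (hsqne _ hal) hqy)
    · rw [show (bf w y) ^ 2 * q x + (bf w x) ^ 2 * q y + bf w y * bf w x * bf x y
          = (bf w y) ^ 2 * q x + ((bf w x) ^ 2 * q y + bf w y * bf w x * bf x y) from by ring]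
      exact hpos _ _ (hmulne _ _ (hsqne _ hbe) hqx)
  have hQZ : lam ^ 2 * q x + mu ^ 2 * q y + lam * mu * bf x y ≠ 0 :=
    fun h' => hz (han _ ((hqzf lam mu).trans h'))
  -- unfold the goal
  show e * (bf w (med bf w x y) * bf w (med bf w x y)) * inv (q w * q (med bf w x y))
      + e * (bf w (lam • x + mu • y) * bf w (lam • x + mu • y))
        * inv (q w * q (lam • x + mu • y))
      = e * (bf w (lam • x + mu • y) * bf w (lam • x + mu • y))
        * inv (q w * q (lam • x + mu • y))
  rw [hbwm, hqm, hbwz lam mu, hqzf lam mu]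
  set QM : R := (bf w y) ^ 2 * q x + (bf w x) ^ 2 * q y + bf w y * bf w x * bf x y with hQMdef
  set QZ : R := lam ^ 2 * q x + mu ^ 2 * q y + lam * mu * bf x y with hQZdef
  -- the core scalar inequality
  have hmain2 :
      e * ((e * (bf w x * bf w y) * (e * (bf w x * bf w y))) * (q w * QZ))
      + e * (((lam * bf w x + mu * bf w y) * (lam * bf w x + mu * bf w y)) * (q w * QM))
      = e * (((lam * bf w x + mu * bf w y) * (lam * bf w x + mu * bf w y)) * (q w * QM)) := by
    have hsq1 : e * ((lam * bf w x) * (lam * bf w x))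
        + e * ((lam * bf w x + mu * bf w y) * (lam * bf w x + mu * bf w y))
        = e * ((lam * bf w x + mu * bf w y) * (lam * bf w x + mu * bf w y)) := by
      rw [show (lam * bf w x + mu * bf w y) * (lam * bf w x + mu * bf w y)
          = (lam * bf w x) * (lam * bf w x) + ((lam * bf w x) * (mu * bf w y)
            + ((mu * bf w y) * (lam * bf w x) + (mu * bf w y) * (mu * bf w y))) from by ring]
      exact hle_self_add _ _
    have hsq2 : e * ((mu * bf w y) * (mu * bf w y))
        + e * ((lam * bf w x + mu * bf w y) * (lam * bf w x + mu * bf w y))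
        = e * ((lam * bf w x + mu * bf w y) * (lam * bf w x + mu * bf w y)) := by
      rw [show (lam * bf w x + mu * bf w y) * (lam * bf w x + mu * bf w y)
          = (mu * bf w y) * (mu * bf w y) + ((lam * bf w x) * (mu * bf w y)
            + ((mu * bf w y) * (lam * bf w x) + (lam * bf w x) * (lam * bf w x))) from by ring]
      exact hle_self_add _ _
    have hsq3 : e * ((lam * bf w x) * (mu * bf w y))
        + e * ((lam * bf w x + mu * bf w y) * (lam * bf w x + mu * bf w y))
        = e * ((lam * bf w x + mu * bf w y) * (lam * bf w x + mu * bf w y)) := by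
      rw [show (lam * bf w x + mu * bf w y) * (lam * bf w x + mu * bf w y)
          = (lam * bf w x) * (mu * bf w y) + ((lam * bf w x) * (lam * bf w x)
            + ((mu * bf w y) * (lam * bf w x) + (mu * bf w y) * (mu * bf w y))) from by ring]
      exact hle_self_add _ _
    have hc1 : e * (q w * ((bf w y) ^ 2 * q x)) + e * (q w * QM) = e * (q w * QM) := by
      rw [show q w * QM = q w * ((bf w y) ^ 2 * q x)
          + (q w * ((bf w x) ^ 2 * q y) + q w * (bf w y * bf w x * bf x y)) from by
        rw [hQMdef]; ring]
      exact hle_self_add _ _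
    have hc2 : e * (q w * ((bf w x) ^ 2 * q y)) + e * (q w * QM) = e * (q w * QM) := by
      rw [show q w * QM = q w * ((bf w x) ^ 2 * q y)
          + (q w * ((bf w y) ^ 2 * q x) + q w * (bf w y * bf w x * bf x y)) from by
        rw [hQMdef]; ring]
      exact hle_self_add _ _
    have hc3 : e * (q w * (bf w y * bf w x * bf x y)) + e * (q w * QM) = e * (q w * QM) := by
      rw [show q w * QM = q w * (bf w y * bf w x * bf x y)
          + (q w * ((bf w y) ^ 2 * q x) + q w * ((bf w x) ^ 2 * q y)) from by
        rw [hQMdef]; ring]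
      exact hle_self_add _ _
    have m1 := hmulmono ((lam * bf w x) * (lam * bf w x))
      ((lam * bf w x + mu * bf w y) * (lam * bf w x + mu * bf w y))
      (q w * ((bf w y) ^ 2 * q x)) (q w * QM) hsq1 hc1
    have m2 := hmulmono ((mu * bf w y) * (mu * bf w y))
      ((lam * bf w x + mu * bf w y) * (lam * bf w x + mu * bf w y))
      (q w * ((bf w x) ^ 2 * q y)) (q w * QM) hsq2 hc2
    have m3 := hmulmono ((lam * bf w x) * (mu * bf w y))
      ((lam * bf w x + mu * bf w y) * (lam * bf w x + mu * bf w y))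
      (q w * (bf w y * bf w x * bf x y)) (q w * QM) hsq3 hc3
    rw [show e * ((e * (bf w x * bf w y) * (e * (bf w x * bf w y))) * (q w * QZ))
        = e * (((lam * bf w x) * (lam * bf w x)) * (q w * ((bf w y) ^ 2 * q x))
          + (((mu * bf w y) * (mu * bf w y)) * (q w * ((bf w x) ^ 2 * q y))
            + ((lam * bf w x) * (mu * bf w y)) * (q w * (bf w y * bf w x * bf x y)))) from by
      rw [show e * ((e * (bf w x * bf w y) * (e * (bf w x * bf w y))) * (q w * QZ))
          = e * (e * e) * ((bf w x * bf w y) * ((bf w x * bf w y) * (q w * QZ))) from by ring,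
        show e * (e * e) = e from by rw [hee, hee], hQZdef]
      ring]
    exact hcombine _ _ _ _ m1 m2 m3
  -- cancellation of the inverses
  set c : R := (q w * QM) * (q w * QZ) with hcdef
  have hcne : c ≠ 0 := hmulne _ _ (hmulne _ _ hqw hQM) (hmulne _ _ hqw hQZ)
  have hinvc := (hinv c hcne).2
  have hinvqm := (hinv (q w * QM) (hmulne _ _ hqw hQM)).2
  have hinvqz := (hinv (q w * QZ) (hmulne _ _ hqw hQZ)).2
  have cancel : ∀ u : R, (e * u) * c * inv c = e * u := by
    intro u
    rw [show (e * u) * c * inv c = (e * c * inv c) * u from by ring, hinvc, mul_comm]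
  have eA : (e * (e * (bf w x * bf w y) * (e * (bf w x * bf w y))) * inv (q w * QM)) * c
      = e * ((e * (bf w x * bf w y) * (e * (bf w x * bf w y))) * (q w * QZ)) := by
    rw [show (e * (e * (bf w x * bf w y) * (e * (bf w x * bf w y))) * inv (q w * QM)) * c
        = (e * (q w * QM) * inv (q w * QM))
          * ((e * (bf w x * bf w y) * (e * (bf w x * bf w y))) * (q w * QZ)) from by
      rw [hcdef]; ring, hinvqm]
  have eB : (e * ((lam * bf w x + mu * bf w y) * (lam * bf w x + mu * bf w y))
        * inv (q w * QZ)) * c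
      = e * (((lam * bf w x + mu * bf w y) * (lam * bf w x + mu * bf w y)) * (q w * QM)) := by
    rw [show (e * ((lam * bf w x + mu * bf w y) * (lam * bf w x + mu * bf w y))
          * inv (q w * QZ)) * c
        = (e * (q w * QZ) * inv (q w * QZ))
          * (((lam * bf w x + mu * bf w y) * (lam * bf w x + mu * bf w y)) * (q w * QM)) from by
      rw [hcdef]; ring, hinvqz]
  calc e * (e * (bf w x * bf w y) * (e * (bf w x * bf w y))) * inv (q w * QM)
      + e * ((lam * bf w x + mu * bf w y) * (lam * bf w x + mu * bf w y)) * inv (q w * QZ)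
      = e * ((e * (bf w x * bf w y) * (e * (bf w x * bf w y))) * inv (q w * QM)
        + ((lam * bf w x + mu * bf w y) * (lam * bf w x + mu * bf w y)) * inv (q w * QZ)) := by
        ring
    _ = e * ((e * (bf w x * bf w y) * (e * (bf w x * bf w y))) * inv (q w * QM)
        + ((lam * bf w x + mu * bf w y) * (lam * bf w x + mu * bf w y)) * inv (q w * QZ))
        * c * inv c := by rw [cancel]
    _ = ((e * (e * (bf w x * bf w y) * (e * (bf w x * bf w y))) * inv (q w * QM)) * c
        + (e * ((lam * bf w x + mu * bf w y) * (lam * bf w x + mu * bf w y))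
          * inv (q w * QZ)) * c) * inv c := by ring_nf
    _ = (e * (((lam * bf w x + mu * bf w y) * (lam * bf w x + mu * bf w y)) * (q w * QM)))
        * inv c := by rw [eA, eB, hmain2]
    _ = (e * ((lam * bf w x + mu * bf w y) * (lam * bf w x + mu * bf w y))
        * inv (q w * QZ)) * c * inv c := by rw [eB]
    _ = e * ((lam * bf w x + mu * bf w y) * (lam * bf w x + mu * bf w y)) * inv (q w * QZ) := by
        rw [show e * ((lam * bf w x + mu * bf w y) * (lam * bf w x + mu * bf w y))
            * inv (q w * QZ)
          = e * (((lam * bf w x + mu * bf w y) * (lam * bf w x + mu * bf w y))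
            * inv (q w * QZ)) from by ring]
        exact cancel _

end SupertropicalCS
end

section
/- Let W, X, Y be rays in V with W ∉ {X, Y}^⊥, and suppose CS(W, −) is not monotone on [X, Y], i.e. there exists Z₀ ∈ [X, Y] with CS(W, Z₀) < min(CS(W, X), CS(W, Y)). Then the median M := M_W(X, Y) satisfies CS(W, M)²·CS(X, Y) = CS(W, X)·CS(W, Y), CS(W, M) < min(CS(W, X), CS(W, Y)), and M is the unique ray Z ∈ [X, Y] at which CS(W, −) attains its minimal value on [X, Y]. -/
namespace SupertropicalCS

section Helpers
variable {R : Type*} [CommSemiring R]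

lemma rle_trans' {a b c : R} (h1 : rle a b) (h2 : rle b c) : rle a c := by
  have h1' : a + b = b := h1
  have h2' : b + c = c := h2
  show a + c = c
  calc a + c = a + (b + c) := by rw [h2']
    _ = (a + b) + c := by rw [add_assoc]
    _ = b + c := by rw [h1']
    _ = c := h2'

lemma rle_antisymm' {a b : R} (h1 : rle a b) (h2 : rle b a) : a = b := by
  have h1' : a + b = b := h1
  have h2' : b + a = a := h2
  calc a = b + a := h2'.symm
    _ = a + b := add_comm _ _
    _ = b := h1'

lemma rle_congr' {a a' b b' : R} (ha : a = a') (hb : b = b') (h : rle a b) : rle a' b' :=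
  ha ▸ hb ▸ h

lemma rlt_congr' {a a' b b' : R} (ha : a = a') (hb : b = b') (h : rlt a b) : rlt a' b' :=
  ha ▸ hb ▸ h

lemma rle_add_out' {a b c : R} (h1 : rle a c) (h2 : rle b c) : rle (a + b) c := by
  have h1' : a + c = c := h1
  have h2' : b + c = c := h2
  show (a + b) + c = c
  rw [add_assoc, h2', h1']

lemma rle_rlt_trans' {a b c : R} (h1 : rle a b) (h2 : rlt b c) : rlt a c :=
  ⟨rle_trans' h1 h2.1, fun hEq => h2.2 (rle_antisymm' h2.1 (hEq ▸ h1))⟩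

lemma rlt_rle_trans' {a b c : R} (h1 : rlt a b) (h2 : rle b c) : rlt a c :=
  ⟨rle_trans' h1.1 h2, fun hEq => h1.2 (rle_antisymm' h1.1 (hEq.symm ▸ h2))⟩

lemma rlt_ne_zero' {a b : R} (h : rlt a b) : b ≠ 0 := by
  intro hb
  apply h.2
  have h1 : a + b = b := h.1
  rw [hb] at h1 ⊢
  rw [add_zero] at h1
  exact h1

variable (e : R)

lemma gidem (hbip : ∀ a b : R, e*a + e*b = e*a ∨ e*a + e*b = e*b) (a : R) :
    e * a + e * a = e * a := by
  rcases hbip a a with h | h <;> exact h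

lemma grefl (hbip : ∀ a b : R, e*a + e*b = e*a ∨ e*a + e*b = e*b) (a : R) :
    rle (e*a) (e*a) := gidem e hbip a

lemma gtotal (hbip : ∀ a b : R, e*a + e*b = e*a ∨ e*a + e*b = e*b) (a b : R) :
    rle (e*a) (e*b) ∨ rle (e*b) (e*a) := by
  rcases hbip a b with h | h
  · right; show e*b + e*a = e*a; rw [add_comm]; exact h
  · left; exact h

lemma rle_left (hbip : ∀ a b : R, e*a + e*b = e*a ∨ e*a + e*b = e*b) (a b : R) :
    rle (e*a) (e*(a+b)) := by
  show e*a + e*(a+b) = e*(a+b)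
  calc e*a + e*(a+b) = (e*a + e*a) + e*b := by ring
    _ = e*a + e*b := by rw [gidem e hbip a]
    _ = e*(a+b) := by ring

lemma gmul (c : R) {x y : R} (h : rle (e*x) (e*y)) : rle (e*(c*x)) (e*(c*y)) := by
  have h' : e*x + e*y = e*y := h
  show e*(c*x) + e*(c*y) = e*(c*y)
  calc e*(c*x) + e*(c*y) = c*(e*x + e*y) := by ring
    _ = c*(e*y) := by rw [h']
    _ = e*(c*y) := by ring

variable (inv : R → R)

lemma cancel_eq (hinv2 : ∀ a : R, a ≠ 0 → e * a * inv a = e) {a x y : R} (ha : a ≠ 0)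
    (h : e*(a*x) = e*(a*y)) : e*x = e*y := by
  have c1 : inv a * (e*(a*x)) = e*x := by
    calc inv a * (e*(a*x)) = (e*a*inv a)*x := by ring
      _ = e*x := by rw [hinv2 a ha]
  have c2 : inv a * (e*(a*y)) = e*y := by
    calc inv a * (e*(a*y)) = (e*a*inv a)*y := by ring
      _ = e*y := by rw [hinv2 a ha]
  rw [← c1, ← c2, h]

lemma cancel_rle (hinv2 : ∀ a : R, a ≠ 0 → e * a * inv a = e) {a x y : R} (ha : a ≠ 0)
    (h : rle (e*(a*x)) (e*(a*y))) : rle (e*x) (e*y) := by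
  have h' : e*(a*x) + e*(a*y) = e*(a*y) := h
  have c1 : inv a * (e*(a*x)) = e*x := by
    calc inv a * (e*(a*x)) = (e*a*inv a)*x := by ring
      _ = e*x := by rw [hinv2 a ha]
  have c2 : inv a * (e*(a*y)) = e*y := by
    calc inv a * (e*(a*y)) = (e*a*inv a)*y := by ring
      _ = e*y := by rw [hinv2 a ha]
  show e*x + e*y = e*y
  calc e*x + e*y = inv a * (e*(a*x)) + inv a * (e*(a*y)) := by rw [c1, c2]
    _ = inv a * (e*(a*x) + e*(a*y)) := by rw [mul_add]
    _ = inv a * (e*(a*y)) := by rw [h']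
    _ = e*y := c2

lemma cancel_rlt (hinv2 : ∀ a : R, a ≠ 0 → e * a * inv a = e) {a x y : R} (ha : a ≠ 0)
    (h : rlt (e*(a*x)) (e*(a*y))) : rlt (e*x) (e*y) := by
  refine ⟨cancel_rle e inv hinv2 ha h.1, fun hEq => h.2 ?_⟩
  calc e*(a*x) = a*(e*x) := by ring
    _ = a*(e*y) := by rw [hEq]
    _ = e*(a*y) := by ring

lemma gmul_rlt (hinv2 : ∀ a : R, a ≠ 0 → e * a * inv a = e) {c x y : R} (hc : c ≠ 0)
    (h : rlt (e*x) (e*y)) : rlt (e*(c*x)) (e*(c*y)) :=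
  ⟨gmul e c h.1, fun hEq => h.2 (cancel_eq e inv hinv2 hc hEq)⟩

lemma rlt_mul_both (hinv2 : ∀ a : R, a ≠ 0 → e * a * inv a = e)
    (hzd : ∀ a b : R, a * b = 0 → a = 0 ∨ b = 0)
    {a b c d : R} (h1 : rlt (e*a) (e*b)) (h2 : rlt (e*c) (e*d))
    (hbd : e*(b*d) ≠ 0) : rlt (e*(a*c)) (e*(b*d)) := by
  have hb : b ≠ 0 := fun hb0 => hbd (by rw [hb0]; ring)
  have m1 : rle (e*(a*c)) (e*(b*c)) := by
    have := gmul e c h1.1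
    exact rle_congr' (by ring) (by ring) this
  have m2 : rle (e*(b*c)) (e*(b*d)) := gmul e b h2.1
  refine ⟨rle_trans' m1 m2, fun hEq => ?_⟩
  have m2' : rle (e*(b*c)) (e*(a*c)) := by rw [hEq]; exact m2
  have m1' : rle (e*(b*d)) (e*(b*c)) := by rw [← hEq]; exact m1
  have hbc : e*(b*c) = e*(b*d) := rle_antisymm' m2 m1'
  exact h2.2 (cancel_eq e inv hinv2 hb hbc)

lemma sq_mono (hbip : ∀ a b : R, e*a + e*b = e*a ∨ e*a + e*b = e*b) {a b : R}
    (h : rle (e*a) (e*b)) : rle (e*(a*a)) (e*(b*b)) := by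
  have m1 : rle (e*(a*a)) (e*(a*b)) := gmul e a h
  have m2 : rle (e*(a*b)) (e*(b*b)) := rle_congr' (by ring) rfl (gmul e b h)
  exact rle_trans' m1 m2

lemma sq_inj (hbip : ∀ a b : R, e*a + e*b = e*a ∨ e*a + e*b = e*b)
    (hinv2 : ∀ a : R, a ≠ 0 → e * a * inv a = e)
    (hzd : ∀ a b : R, a * b = 0 → a = 0 ∨ b = 0)
    {a b : R} (h : e*(a*a) = e*(b*b)) : e*a = e*b := by
  rcases gtotal e hbip a b with hle | hle
  · by_cases ha : a = 0
    · have hbb : e*(b*b) = 0 := by rw [← h, ha]; ring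
      rcases hzd e (b*b) hbb with he0 | hb0
      · rw [he0]; ring
      · rcases hzd b b hb0 with hb | hb <;> rw [ha, hb]
    · have m1 : rle (e*(a*a)) (e*(a*b)) := gmul e a hle
      have m2 : rle (e*(a*b)) (e*(b*b)) := rle_congr' (by ring) rfl (gmul e b hle)
      have m2' : rle (e*(a*b)) (e*(a*a)) := by rw [h]; exact m2
      exact cancel_eq e inv hinv2 ha (rle_antisymm' m1 m2')
  · by_cases hb : b = 0
    · have haa : e*(a*a) = 0 := by rw [h, hb]; ring
      rcases hzd e (a*a) haa with he0 | ha0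
      · rw [he0]; ring
      · rcases hzd a a ha0 with ha | ha <;> rw [ha, hb]
    · have m1 : rle (e*(b*b)) (e*(b*a)) := gmul e b hle
      have m2 : rle (e*(b*a)) (e*(a*a)) := rle_congr' (by ring) rfl (gmul e a hle)
      have m2' : rle (e*(b*a)) (e*(b*b)) := by rw [← h]; exact m2
      exact (cancel_eq e inv hinv2 hb (rle_antisymm' m1 m2')).symm

lemma sq_rle (hbip : ∀ a b : R, e*a + e*b = e*a ∨ e*a + e*b = e*b)
    (hinv2 : ∀ a : R, a ≠ 0 → e * a * inv a = e)
    (hzd : ∀ a b : R, a * b = 0 → a = 0 ∨ b = 0)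
    {a b : R} (h : rle (e*(a*a)) (e*(b*b))) : rle (e*a) (e*b) := by
  rcases gtotal e hbip a b with hle | hle
  · exact hle
  · have h2 : rle (e*(b*b)) (e*(a*a)) := sq_mono e hbip hle
    have heq : e*(a*a) = e*(b*b) := rle_antisymm' h h2
    have := sq_inj e inv hbip hinv2 hzd heq
    rw [this]
    exact grefl e hbip b

lemma sq_rlt (hbip : ∀ a b : R, e*a + e*b = e*a ∨ e*a + e*b = e*b)
    (hinv2 : ∀ a : R, a ≠ 0 → e * a * inv a = e)
    (hzd : ∀ a b : R, a * b = 0 → a = 0 ∨ b = 0)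
    {a b : R} (h : rlt (e*(a*a)) (e*(b*b))) : rlt (e*a) (e*b) := by
  refine ⟨sq_rle e inv hbip hinv2 hzd h.1, fun hEq => h.2 ?_⟩
  calc e*(a*a) = a*(e*a) := by ring
    _ = a*(e*b) := by rw [hEq]
    _ = b*(e*a) := by ring
    _ = b*(e*b) := by rw [hEq]
    _ = e*(b*b) := by ring

lemma crossrle (hinv2 : ∀ a : R, a ≠ 0 → e * a * inv a = e)
    {p r : R} (hp : p ≠ 0) (hr : r ≠ 0) (u v : R) :
    rle (e*u*inv p) (e*v*inv r) ↔ rle (e*(u*r)) (e*(v*p)) := by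
  have k1 : (p*r) * (e*u*inv p) = e*(u*r) := by
    calc (p*r) * (e*u*inv p) = (e*p*inv p)*(u*r) := by ring
      _ = e*(u*r) := by rw [hinv2 p hp]
  have k2 : (p*r) * (e*v*inv r) = e*(v*p) := by
    calc (p*r) * (e*v*inv r) = (e*r*inv r)*(v*p) := by ring
      _ = e*(v*p) := by rw [hinv2 r hr]
  have k3 : (inv p * inv r) * (e*(u*r)) = e*u*inv p := by
    calc (inv p * inv r) * (e*(u*r)) = (e*r*inv r)*(u*inv p) := by ring
      _ = e*(u*inv p) := by rw [hinv2 r hr]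
      _ = e*u*inv p := by ring
  have k4 : (inv p * inv r) * (e*(v*p)) = e*v*inv r := by
    calc (inv p * inv r) * (e*(v*p)) = (e*p*inv p)*(v*inv r) := by ring
      _ = e*(v*inv r) := by rw [hinv2 p hp]
      _ = e*v*inv r := by ring
  constructor
  · intro h
    have h' : (e*u*inv p) + (e*v*inv r) = e*v*inv r := h
    show e*(u*r) + e*(v*p) = e*(v*p)
    calc e*(u*r) + e*(v*p) = (p*r)*(e*u*inv p) + (p*r)*(e*v*inv r) := by rw [k1, k2]
      _ = (p*r)*((e*u*inv p) + (e*v*inv r)) := by rw [mul_add]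
      _ = (p*r)*(e*v*inv r) := by rw [h']
      _ = e*(v*p) := k2
  · intro h
    have h' : e*(u*r) + e*(v*p) = e*(v*p) := h
    show (e*u*inv p) + (e*v*inv r) = e*v*inv r
    calc (e*u*inv p) + (e*v*inv r)
        = (inv p*inv r)*(e*(u*r)) + (inv p*inv r)*(e*(v*p)) := by rw [k3, k4]
      _ = (inv p*inv r)*(e*(u*r) + e*(v*p)) := by rw [mul_add]
      _ = (inv p*inv r)*(e*(v*p)) := by rw [h']
      _ = e*v*inv r := k4
  
lemma crosseq (hinv2 : ∀ a : R, a ≠ 0 → e * a * inv a = e)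
    {p r : R} (hp : p ≠ 0) (hr : r ≠ 0) (u v : R) :
    e*u*inv p = e*v*inv r ↔ e*(u*r) = e*(v*p) := by
  have k1 : (p*r) * (e*u*inv p) = e*(u*r) := by
    calc (p*r) * (e*u*inv p) = (e*p*inv p)*(u*r) := by ring
      _ = e*(u*r) := by rw [hinv2 p hp]
  have k2 : (p*r) * (e*v*inv r) = e*(v*p) := by
    calc (p*r) * (e*v*inv r) = (e*r*inv r)*(v*p) := by ring
      _ = e*(v*p) := by rw [hinv2 r hr]
  have k3 : (inv p * inv r) * (e*(u*r)) = e*u*inv p := by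
    calc (inv p * inv r) * (e*(u*r)) = (e*r*inv r)*(u*inv p) := by ring
      _ = e*(u*inv p) := by rw [hinv2 r hr]
      _ = e*u*inv p := by ring
  have k4 : (inv p * inv r) * (e*(v*p)) = e*v*inv r := by
    calc (inv p * inv r) * (e*(v*p)) = (e*p*inv p)*(v*inv r) := by ring
      _ = e*(v*inv r) := by rw [hinv2 p hp]
      _ = e*v*inv r := by ring
  constructor
  · intro h; rw [← k1, ← k2, h]
  · intro h; rw [← k3, ← k4, h]

lemma crossrlt (hinv2 : ∀ a : R, a ≠ 0 → e * a * inv a = e)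
    {p r : R} (hp : p ≠ 0) (hr : r ≠ 0) (u v : R) :
    rlt (e*u*inv p) (e*v*inv r) ↔ rlt (e*(u*r)) (e*(v*p)) := by
  constructor
  · intro h
    exact ⟨(crossrle e inv hinv2 hp hr u v).mp h.1,
      fun hEq => h.2 ((crosseq e inv hinv2 hp hr u v).mpr hEq)⟩
  · intro h
    exact ⟨(crossrle e inv hinv2 hp hr u v).mpr h.1,
      fun hEq => h.2 ((crosseq e inv hinv2 hp hr u v).mp hEq)⟩




end Helpers

lemma clear_den {R : Type*} [CommSemiring R] (e : R) (inv : R → R)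
    (hinv2 : ∀ a : R, a ≠ 0 → e * a * inv a = e) {p : R} (hp : p ≠ 0) (t : R) :
    (e*t*inv p)*p = e*t := by
  calc (e*t*inv p)*p = (e*p*inv p)*t := by ring
    _ = e*t := by rw [hinv2 p hp]

lemma ray_eq_of_smul {R V : Type*} [CommSemiring R] [AddCommMonoid V] [Module R V]
    (hzd : ∀ a b : R, a * b = 0 → a = 0 ∨ b = 0)
    {c d : R} {u v : V} (hc : c ≠ 0) (hd : d ≠ 0) (h : c • u = d • v) :
    ray R u = ray R v := by
  have key : ∀ (c d : R) (u v : V), c ≠ 0 → d ≠ 0 → c • u = d • v →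
      ray R u ⊆ ray R v := by
    intro c d u v hc hd h t ht
    obtain ⟨ht0, l, mm, hl, hm, hrel⟩ := ht
    refine ⟨ht0, l*d, c*mm, ?_, ?_, ?_⟩
    · intro h0; rcases hzd _ _ h0 with h' | h'; exacts [hl h', hd h']
    · intro h0; rcases hzd _ _ h0 with h' | h'; exacts [hc h', hm h']
    · calc (l*d) • v = l • (d • v) := mul_smul l d v
        _ = l • (c • u) := by rw [h]
        _ = (l*c) • u := smul_smul l c u
        _ = (c*l) • u := by rw [mul_comm]
        _ = c • (l • u) := mul_smul c l u
        _ = c • (mm • t) := by rw [hrel]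
        _ = (c*mm) • t := smul_smul c mm t
  exact Set.Subset.antisymm (key c d u v hc hd h) (key d c v u hd hc h.symm)

set_option maxHeartbeats 1600000 in
theorem statement9 {R V : Type*} [CommSemiring R] [AddCommMonoid V] [Module R V]
    (e : R) (he : e = 1 + 1)
    (hst : ∀ a b : R, (e * a ≠ e * b → a + b = a ∨ a + b = b) ∧ (e * a = e * b → a + b = e * a))
    (hzd : ∀ a b : R, a * b = 0 → a = 0 ∨ b = 0)
    (hbip : ∀ a b : R, e * a + e * b = e * a ∨ e * a + e * b = e * b)
    (inv : R → R)
    (hinv : ∀ a : R, a ≠ 0 → e * inv a = inv a ∧ e * a * inv a = e)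
    (hmod : ∀ (c : R) (x : V), c • x = 0 → c = 0 ∨ x = 0)
    (q : V → R) (bf : V → V → R)
    (hq : ∀ (a : R) (x : V), q (a • x) = a ^ 2 * q x)
    (hba : ∀ x y z : V, bf (x + y) z = bf x z + bf y z)
    (hbs : ∀ (a : R) (x y : V), bf (a • x) y = a * bf x y)
    (hbsymm : ∀ x y : V, bf x y = bf y x)
    (hcomp : ∀ x y : V, q (x + y) = q x + q y + bf x y)
    (han : ∀ x : V, q x = 0 → x = 0)
    (w x y : V) (hw : w ≠ 0) (hx : x ≠ 0) (hy : y ≠ 0)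
    (h : ray R w ∉ polar R bf {ray R x, ray R y})
    (hnm : ∃ lam mu : R, lam • x + mu • y ≠ 0 ∧
        rlt (CS e inv q bf w (lam • x + mu • y)) (CS e inv q bf w x) ∧
        rlt (CS e inv q bf w (lam • x + mu • y)) (CS e inv q bf w y)) :
    (CS e inv q bf w (med bf w x y) * CS e inv q bf w (med bf w x y) * CS e inv q bf x y
        = CS e inv q bf w x * CS e inv q bf w y) ∧
    rlt (CS e inv q bf w (med bf w x y)) (CS e inv q bf w x) ∧
    rlt (CS e inv q bf w (med bf w x y)) (CS e inv q bf w y) ∧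
    (∀ lam mu : R, lam • x + mu • y ≠ 0 →
        rle (CS e inv q bf w (med bf w x y)) (CS e inv q bf w (lam • x + mu • y))) ∧
    (∀ lam mu : R, lam • x + mu • y ≠ 0 →
        CS e inv q bf w (lam • x + mu • y) = CS e inv q bf w (med bf w x y) →
        ray R (lam • x + mu • y) = ray R (med bf w x y)) := by
  clear h
  have hinv2 : ∀ a : R, a ≠ 0 → e * a * inv a = e := fun a ha => (hinv a ha).2
  have hmulne : ∀ a b : R, a ≠ 0 → b ≠ 0 → a * b ≠ 0 :=
    fun a b ha hb hab => (hzd a b hab).elim ha hb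
  have hee : e * e = e := by
    calc e*e = e*(1+1) := by rw [← he]
      _ = e*1 + e*1 := by rw [mul_add]
      _ = e*1 := gidem e hbip 1
      _ = e := mul_one e
  have geabs : ∀ s : R, e*(e*s) = e*s := fun s => by rw [← mul_assoc, hee]
  simp only [CS] at hnm ⊢
  obtain ⟨A, hA⟩ : ∃ t, bf w x = t := ⟨_, rfl⟩
  obtain ⟨B, hB⟩ : ∃ t, bf w y = t := ⟨_, rfl⟩
  obtain ⟨G, hG⟩ : ∃ t, bf x y = t := ⟨_, rfl⟩
  obtain ⟨qw, hqw⟩ : ∃ t, q w = t := ⟨_, rfl⟩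
  obtain ⟨qx, hqx⟩ : ∃ t, q x = t := ⟨_, rfl⟩
  obtain ⟨qy, hqy⟩ : ∃ t, q y = t := ⟨_, rfl⟩
  obtain ⟨m, hm⟩ : ∃ t, med bf w x y = t := ⟨_, rfl⟩
  rw [hA, hB, hqw, hqx, hqy] at hnm ⊢
  rw [hG, hm]
  -- basic formulas
  have hb1 : ∀ l mu : R, bf (l • x) (mu • y) = l*mu*G := by
    intro l mu
    rw [hbs, hbsymm x, hbs, hbsymm y x, hG]
    ring
  have hN : ∀ l mu : R, bf w (l • x + mu • y) = l*A + mu*B := by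
    intro l mu
    rw [hbsymm w, hba, hbs, hbs, hbsymm x w, hbsymm y w, hA, hB]
  have hQf : ∀ l mu : R, q (l • x + mu • y) = l*l*qx + mu*mu*qy + l*mu*G := by
    intro l mu
    rw [hcomp, hq, hq, hb1, hqx, hqy]
    ring
  -- extract witness
  obtain ⟨l0, m0, hz0, h1, h2⟩ := hnm
  rw [hN l0 m0, hQf l0 m0] at h1 h2
  -- nonzero facts
  have hCSx_ne : e*(A*A)*inv (qw*qx) ≠ 0 := rlt_ne_zero' h1
  have he0 : e ≠ 0 := fun h0 => hCSx_ne (by rw [h0]; ring)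
  have hAne : A ≠ 0 := fun h0 => hCSx_ne (by rw [h0]; ring)
  have hBne : B ≠ 0 := fun h0 => (rlt_ne_zero' h2) (by rw [h0]; ring)
  have hqwne : qw ≠ 0 := by rw [← hqw]; exact fun h0 => hw (han w h0)
  have hqxne : qx ≠ 0 := by rw [← hqx]; exact fun h0 => hx (han x h0)
  have hqyne : qy ≠ 0 := by rw [← hqy]; exact fun h0 => hy (han y h0)
  have hQ0ne : (l0*l0*qx + m0*m0*qy + l0*m0*G) ≠ 0 := by
    rw [← hQf l0 m0]; exact fun h0 => hz0 (han _ h0)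
  -- cross-multiplied witness inequalities
  have GA := (crossrlt e inv hinv2 (hmulne _ _ hqwne hQ0ne) (hmulne _ _ hqwne hqxne)
      _ _).mp h1
  have GB := (crossrlt e inv hinv2 (hmulne _ _ hqwne hQ0ne) (hmulne _ _ hqwne hqyne)
      _ _).mp h2
  have GA' : rlt (e*((l0*A + m0*B)*(l0*A + m0*B)*qx))
      (e*((A*A)*(l0*l0*qx + m0*m0*qy + l0*m0*G))) :=
    cancel_rlt e inv hinv2 hqwne (rlt_congr' (by ring) (by ring) GA)
  have GB' : rlt (e*((l0*A + m0*B)*(l0*A + m0*B)*qy))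
      (e*((B*B)*(l0*l0*qx + m0*m0*qy + l0*m0*G))) :=
    cancel_rlt e inv hinv2 hqwne (rlt_congr' (by ring) (by ring) GB)
  have HA : rlt (e*(l0*l0*qx)) (e*(l0*l0*qx + m0*m0*qy + l0*m0*G)) := by
    have s1 : rle (e*((A*A)*(l0*l0*qx)))
        (e*((A*A)*(l0*l0*qx) + (l0*m0*(A*B)*qx + l0*m0*(A*B)*qx + m0*m0*(B*B)*qx))) :=
      rle_left e hbip _ _
    have s2 : rlt (e*((A*A)*(l0*l0*qx))) (e*((A*A)*(l0*l0*qx + m0*m0*qy + l0*m0*G))) :=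
      rle_rlt_trans' (rle_congr' rfl (by ring) s1) GA'
    exact cancel_rlt e inv hinv2 (hmulne A A hAne hAne) s2
  have HB : rlt (e*(m0*m0*qy)) (e*(l0*l0*qx + m0*m0*qy + l0*m0*G)) := by
    have s1 : rle (e*((B*B)*(m0*m0*qy)))
        (e*((B*B)*(m0*m0*qy) + (l0*l0*(A*A)*qy + l0*m0*(A*B)*qy + l0*m0*(A*B)*qy))) :=
      rle_left e hbip _ _
    have s2 : rlt (e*((B*B)*(m0*m0*qy))) (e*((B*B)*(l0*l0*qx + m0*m0*qy + l0*m0*G))) :=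
      rle_rlt_trans' (rle_congr' rfl (by ring) s1) GB'
    exact cancel_rlt e inv hinv2 (hmulne B B hBne hBne) s2
  have GA2 : rlt (e*(m0*m0*(B*B)*qx)) (e*((A*A)*(l0*l0*qx + m0*m0*qy + l0*m0*G))) := by
    have s1 : rle (e*(m0*m0*(B*B)*qx))
        (e*(m0*m0*(B*B)*qx + (l0*l0*(A*A)*qx + l0*m0*(A*B)*qx + l0*m0*(A*B)*qx))) :=
      rle_left e hbip _ _
    exact rle_rlt_trans' (rle_congr' rfl (by ring) s1) GA'
  have GB2 : rlt (e*(l0*l0*(A*A)*qy)) (e*((B*B)*(l0*l0*qx + m0*m0*qy + l0*m0*G))) := by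
    have s1 : rle (e*(l0*l0*(A*A)*qy))
        (e*(l0*l0*(A*A)*qy + (m0*m0*(B*B)*qy + l0*m0*(A*B)*qy + l0*m0*(A*B)*qy))) :=
      rle_left e hbip _ _
    exact rle_rlt_trans' (rle_congr' rfl (by ring) s1) GB'
  -- the dominant term of q z0
  have hQ0g : e*(l0*l0*qx + m0*m0*qy + l0*m0*G) = e*(l0*m0*G) := by
    have hexp : e*(l0*l0*qx + m0*m0*qy + l0*m0*G)
        = e*(l0*l0*qx) + e*(m0*m0*qy) + e*(l0*m0*G) := by ring
    rcases hbip (l0*l0*qx) (m0*m0*qy) with h12 | h12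
    · rcases hbip (l0*l0*qx) (l0*m0*G) with h13 | h13
      · exfalso
        have hcontra : e*(l0*l0*qx + m0*m0*qy + l0*m0*G) = e*(l0*l0*qx) := by
          rw [hexp, h12, h13]
        exact HA.2 hcontra.symm
      · rw [hexp, h12, h13]
    · rcases hbip (m0*m0*qy) (l0*m0*G) with h23 | h23
      · exfalso
        have hcontra : e*(l0*l0*qx + m0*m0*qy + l0*m0*G) = e*(m0*m0*qy) := by
          rw [hexp, h12, h23]
        exact HB.2 hcontra.symm
      · rw [hexp, h12, h23]
  have hQ0gne : e*(l0*m0*G) ≠ 0 := by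
    rw [← hQ0g]; exact hmulne e _ he0 hQ0ne
  have hl0 : l0 ≠ 0 := fun h0 => hQ0gne (by rw [h0]; ring)
  have hm0 : m0 ≠ 0 := fun h0 => hQ0gne (by rw [h0]; ring)
  have hGne : G ≠ 0 := fun h0 => hQ0gne (by rw [h0]; ring)
  rw [hQ0g] at HA HB
  have GA2' : rlt (e*(m0*m0*(B*B)*qx)) (e*((A*A)*(l0*m0*G))) := by
    refine rlt_congr' rfl ?_ GA2
    calc e*((A*A)*(l0*l0*qx + m0*m0*qy + l0*m0*G))
        = (A*A)*(e*(l0*l0*qx + m0*m0*qy + l0*m0*G)) := by ring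
      _ = (A*A)*(e*(l0*m0*G)) := by rw [hQ0g]
      _ = e*((A*A)*(l0*m0*G)) := by ring
  have GB2' : rlt (e*(l0*l0*(A*A)*qy)) (e*((B*B)*(l0*m0*G))) := by
    refine rlt_congr' rfl ?_ GB2
    calc e*((B*B)*(l0*l0*qx + m0*m0*qy + l0*m0*G))
        = (B*B)*(e*(l0*l0*qx + m0*m0*qy + l0*m0*G)) := by ring
      _ = (B*B)*(e*(l0*m0*G)) := by rw [hQ0g]
      _ = e*((B*B)*(l0*m0*G)) := by ring
  -- key strict inequalities
  have hI1 : rlt (e*((B*qx)*(B*qx))) (e*((A*G)*(A*G))) := by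
    have s := rlt_mul_both e inv hinv2 hzd GA2' HA
      (by
        refine hmulne e _ he0 ?_
        exact hmulne _ _ (hmulne _ _ (hmulne A A hAne hAne)
          (hmulne _ _ (hmulne l0 m0 hl0 hm0) hGne))
          (hmulne _ _ (hmulne l0 m0 hl0 hm0) hGne))
    exact cancel_rlt e inv hinv2
      (hmulne _ _ (hmulne l0 l0 hl0 hl0) (hmulne m0 m0 hm0 hm0))
      (rlt_congr' (by ring) (by ring) s)
  have hI2 : rlt (e*((A*qy)*(A*qy))) (e*((B*G)*(B*G))) := by
    have s := rlt_mul_both e inv hinv2 hzd GB2' HB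
      (by
        refine hmulne e _ he0 ?_
        exact hmulne _ _ (hmulne _ _ (hmulne B B hBne hBne)
          (hmulne _ _ (hmulne l0 m0 hl0 hm0) hGne))
          (hmulne _ _ (hmulne l0 m0 hl0 hm0) hGne))
    exact cancel_rlt e inv hinv2
      (hmulne _ _ (hmulne l0 l0 hl0 hl0) (hmulne m0 m0 hm0 hm0))
      (rlt_congr' (by ring) (by ring) s)
  have hS1 : rlt (e*(B*qx)) (e*(A*G)) := sq_rlt e inv hbip hinv2 hzd hI1
  have hS2 : rlt (e*(A*qy)) (e*(B*G)) := sq_rlt e inv hbip hinv2 hzd hI2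
  -- the median
  have hmv : m = B • x + A • y := by
    rw [← hm]; simp only [med]; rw [hA, hB]
  have hqmf : q m = B*B*qx + A*A*qy + B*A*G := by rw [hmv]; exact hQf B A
  have hbmf : bf w m = e*(A*B) := by
    rw [hmv, hN B A]
    calc B*A + A*B = A*B + A*B := by ring
      _ = e*(A*B) := (hst (A*B) (A*B)).2 rfl
  have hBq_lt : rlt (e*(B*(B*qx))) (e*(B*(A*G))) := gmul_rlt e inv hinv2 hBne hS1
  have hAq_lt : rlt (e*(A*(A*qy))) (e*(A*(B*G))) := gmul_rlt e inv hinv2 hAne hS2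
  have hqmg : e * q m = e*(A*B*G) := by
    have t1 : rle (e*(B*B*qx)) (e*(B*A*G)) := rle_congr' (by ring) (by ring) hBq_lt.1
    have t2 : rle (e*(A*A*qy)) (e*(B*A*G)) := rle_congr' (by ring) (by ring) hAq_lt.1
    calc e * q m = e*(B*B*qx) + e*(A*A*qy) + e*(B*A*G) := by rw [hqmf]; ring
      _ = e*(B*A*G) := rle_add_out' t1 t2
      _ = e*(A*B*G) := by ring
  have hABGne : A*(B*G) ≠ 0 := hmulne A _ hAne (hmulne B G hBne hGne)
  have heABG : e*(A*B*G) ≠ 0 :=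
    hmulne e _ he0 (hmulne _ _ (hmulne A B hAne hBne) hGne)
  have hqmne : q m ≠ 0 := fun h0 => heABG (by rw [← hqmg, h0, mul_zero])
  have hd1 : qw * q m ≠ 0 := hmulne _ _ hqwne hqmne
  have hd2 : qx * qy ≠ 0 := hmulne _ _ hqxne hqyne
  have hd3 : qw * qx ≠ 0 := hmulne _ _ hqwne hqxne
  have hd4 : qw * qy ≠ 0 := hmulne _ _ hqwne hqyne
  -- GOAL 2
  have hg2 : rlt (e*(bf w m * bf w m)*inv (qw * q m)) (e*(A*A)*inv (qw*qx)) := by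
    apply (crossrlt e inv hinv2 hd1 hd3 _ _).mpr
    rw [hbmf]
    have eq1 : e*(e*(A*B) * (e*(A*B)) * (qw*qx)) = e*((qw*(A*A))*(B*(B*qx))) := by
      calc e*(e*(A*B) * (e*(A*B)) * (qw*qx))
          = e*(e*(e*((qw*(A*A))*(B*(B*qx))))) := by ring
        _ = e*((qw*(A*A))*(B*(B*qx))) := by rw [geabs, geabs]
    have eq2 : e*((A*A)*(qw * q m)) = e*((qw*(A*A))*(B*(A*G))) := by
      calc e*((A*A)*(qw * q m)) = ((A*A)*qw)*(e * q m) := by ring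
        _ = ((A*A)*qw)*(e*(A*B*G)) := by rw [hqmg]
        _ = e*((qw*(A*A))*(B*(A*G))) := by ring
    exact rlt_congr' eq1.symm eq2.symm
      (gmul_rlt e inv hinv2 (hmulne _ _ hqwne (hmulne A A hAne hAne)) hBq_lt)
  -- GOAL 3
  have hg3 : rlt (e*(bf w m * bf w m)*inv (qw * q m)) (e*(B*B)*inv (qw*qy)) := by
    apply (crossrlt e inv hinv2 hd1 hd4 _ _).mpr
    rw [hbmf]
    have eq1 : e*(e*(A*B) * (e*(A*B)) * (qw*qy)) = e*((qw*(B*B))*(A*(A*qy))) := by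
      calc e*(e*(A*B) * (e*(A*B)) * (qw*qy))
          = e*(e*(e*((qw*(B*B))*(A*(A*qy))))) := by ring
        _ = e*((qw*(B*B))*(A*(A*qy))) := by rw [geabs, geabs]
    have eq2 : e*((B*B)*(qw * q m)) = e*((qw*(B*B))*(A*(B*G))) := by
      calc e*((B*B)*(qw * q m)) = ((B*B)*qw)*(e * q m) := by ring
        _ = ((B*B)*qw)*(e*(A*B*G)) := by rw [hqmg]
        _ = e*((qw*(B*B))*(A*(B*G))) := by ring
    exact rlt_congr' eq1.symm eq2.symm
      (gmul_rlt e inv hinv2 (hmulne _ _ hqwne (hmulne B B hBne hBne)) hAq_lt)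
  -- GOAL 1
  have hg1 : e*(bf w m * bf w m)*inv (qw * q m) * (e*(bf w m * bf w m)*inv (qw * q m))
      * (e*(G*G)*inv (qx*qy))
      = e*(A*A)*inv (qw*qx) * (e*(B*B)*inv (qw*qy)) := by
    rw [hbmf]
    have hcne : (qw * q m)*((qw * q m)*((qx*qy)*((qw*qx)*(qw*qy)))) ≠ 0 :=
      hmulne _ _ hd1 (hmulne _ _ hd1 (hmulne _ _ hd2 (hmulne _ _ hd3 hd4)))
    have ghL : e*(e*(e*(A*B) * (e*(A*B)))*inv (qw * q m)
          * (e*(e*(A*B) * (e*(A*B)))*inv (qw * q m)) * (e*(G*G)*inv (qx*qy)))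
        = e*(e*(A*B) * (e*(A*B)))*inv (qw * q m)
          * (e*(e*(A*B) * (e*(A*B)))*inv (qw * q m)) * (e*(G*G)*inv (qx*qy)) := by
      calc e*(e*(e*(A*B) * (e*(A*B)))*inv (qw * q m)
            * (e*(e*(A*B) * (e*(A*B)))*inv (qw * q m)) * (e*(G*G)*inv (qx*qy)))
          = e*(e*((e*(A*B) * (e*(A*B)))*inv (qw * q m)
            * (e*(e*(A*B) * (e*(A*B)))*inv (qw * q m)) * (e*(G*G)*inv (qx*qy)))) := by
            ring
        _ = e*((e*(A*B) * (e*(A*B)))*inv (qw * q m)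
            * (e*(e*(A*B) * (e*(A*B)))*inv (qw * q m)) * (e*(G*G)*inv (qx*qy))) :=
            geabs _
        _ = e*(e*(A*B) * (e*(A*B)))*inv (qw * q m)
            * (e*(e*(A*B) * (e*(A*B)))*inv (qw * q m)) * (e*(G*G)*inv (qx*qy)) := by
            ring
    have ghR : e*(e*(A*A)*inv (qw*qx) * (e*(B*B)*inv (qw*qy)))
        = e*(A*A)*inv (qw*qx) * (e*(B*B)*inv (qw*qy)) := by
      calc e*(e*(A*A)*inv (qw*qx) * (e*(B*B)*inv (qw*qy)))
          = e*(e*((A*A)*inv (qw*qx) * (e*(B*B)*inv (qw*qy)))) := by ring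
        _ = e*((A*A)*inv (qw*qx) * (e*(B*B)*inv (qw*qy))) := geabs _
        _ = e*(A*A)*inv (qw*qx) * (e*(B*B)*inv (qw*qy)) := by ring
    have bigL : e*((qw * q m)*((qw * q m)*((qx*qy)*((qw*qx)*(qw*qy))))
          * (e*(e*(A*B) * (e*(A*B)))*inv (qw * q m)
            * (e*(e*(A*B) * (e*(A*B)))*inv (qw * q m)) * (e*(G*G)*inv (qx*qy))))
        = e*((A*B)*((A*B)*((A*B)*((A*B)*((G*G)*((qw*qx)*(qw*qy))))))) := by
      calc e*((qw * q m)*((qw * q m)*((qx*qy)*((qw*qx)*(qw*qy))))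
            * (e*(e*(A*B) * (e*(A*B)))*inv (qw * q m)
              * (e*(e*(A*B) * (e*(A*B)))*inv (qw * q m)) * (e*(G*G)*inv (qx*qy))))
          = e*(((e*(e*(A*B) * (e*(A*B)))*inv (qw * q m))*(qw * q m))
              * (((e*(e*(A*B) * (e*(A*B)))*inv (qw * q m))*(qw * q m))
                * (((e*(G*G)*inv (qx*qy))*(qx*qy)) * ((qw*qx)*(qw*qy))))) := by ring
        _ = e*((e*(e*(A*B) * (e*(A*B))))
              * ((e*(e*(A*B) * (e*(A*B))))
                * ((e*(G*G)) * ((qw*qx)*(qw*qy))))) := by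
            rw [clear_den e inv hinv2 hd1 (e*(A*B) * (e*(A*B))),
              clear_den e inv hinv2 hd2 (G*G)]
        _ = e*(e*(e*(e*(e*(e*(e*(e*((A*B)*((A*B)*((A*B)*((A*B)
              *((G*G)*((qw*qx)*(qw*qy)))))))))))))) := by ring
        _ = e*((A*B)*((A*B)*((A*B)*((A*B)*((G*G)*((qw*qx)*(qw*qy))))))) := by
            rw [geabs, geabs, geabs, geabs, geabs, geabs, geabs]
    have bigR : e*((qw * q m)*((qw * q m)*((qx*qy)*((qw*qx)*(qw*qy))))
          * (e*(A*A)*inv (qw*qx) * (e*(B*B)*inv (qw*qy))))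
        = e*((A*B*G)*((A*B*G)*((A*A)*((B*B)*(qw*(qw*(qx*qy))))))) := by
      calc e*((qw * q m)*((qw * q m)*((qx*qy)*((qw*qx)*(qw*qy))))
            * (e*(A*A)*inv (qw*qx) * (e*(B*B)*inv (qw*qy))))
          = e*(((e*(A*A)*inv (qw*qx))*(qw*qx))
              * (((e*(B*B)*inv (qw*qy))*(qw*qy))
                * ((qw * q m)*((qw * q m)*(qx*qy))))) := by ring
        _ = e*((e*(A*A)) * ((e*(B*B)) * ((qw * q m)*((qw * q m)*(qx*qy))))) := by
            rw [clear_den e inv hinv2 hd3 (A*A), clear_den e inv hinv2 hd4 (B*B)]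
        _ = (e * q m)*((e * q m)*(e*((A*A)*((B*B)*(qw*(qw*(qx*qy))))))) := by ring
        _ = (e*(A*B*G))*((e*(A*B*G))*(e*((A*A)*((B*B)*(qw*(qw*(qx*qy))))))) := by
            rw [hqmg]
        _ = e*(e*(e*((A*B*G)*((A*B*G)*((A*A)*((B*B)*(qw*(qw*(qx*qy))))))))) := by ring
        _ = e*((A*B*G)*((A*B*G)*((A*A)*((B*B)*(qw*(qw*(qx*qy))))))) := by
            rw [geabs, geabs]
    have big := bigL.trans ((by ring :
        e*((A*B)*((A*B)*((A*B)*((A*B)*((G*G)*((qw*qx)*(qw*qy)))))))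
        = e*((A*B*G)*((A*B*G)*((A*A)*((B*B)*(qw*(qw*(qx*qy)))))))).trans bigR.symm)
    have hE := cancel_eq e inv hinv2 hcne big
    rw [← ghL, ← ghR]
    exact hE
  refine ⟨hg1, hg2, hg3, ?_, ?_⟩
  · -- GOAL 4: minimality
    intro lam mu hz
    have hNz := hN lam mu
    have hQz := hQf lam mu
    have hQzne : q (lam • x + mu • y) ≠ 0 := fun h0 => hz (han _ h0)
    apply (crossrle e inv hinv2 hd1 (hmulne _ _ hqwne hQzne) _ _).mpr
    rw [hbmf, hNz, hQz]
    have core : rle (e*((A*A*(B*B))*(lam*lam*qx + mu*mu*qy + lam*mu*G)))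
        (e*(((lam*A + mu*B)*(lam*A + mu*B))*(A*(B*G)))) := by
      have hsplit : e*((A*A*(B*B))*(lam*lam*qx + mu*mu*qy + lam*mu*G))
          = e*(A*A*(B*B)*(lam*lam*qx)) + e*(A*A*(B*B)*(mu*mu*qy))
            + e*(A*A*(B*B)*(lam*mu*G)) := by ring
      rw [hsplit]
      have B1 : rle (e*(A*A*(B*B)*(lam*lam*qx)))
          (e*(((lam*A + mu*B)*(lam*A + mu*B))*(A*(B*G)))) := by
        have s1 : rle (e*((A*(A*(B*(lam*lam))))*(B*qx)))
            (e*((A*(A*(B*(lam*lam))))*(A*G))) := gmul e _ hS1.1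
        have s2 : rle (e*(lam*lam*(A*A)*(A*(B*G))))
            (e*(lam*lam*(A*A)*(A*(B*G))
              + (lam*mu*(A*B) + lam*mu*(A*B) + mu*mu*(B*B))*(A*(B*G)))) :=
          rle_left e hbip _ _
        exact rle_trans' (rle_congr' (by ring) (by ring) s1)
          (rle_congr' rfl (by ring) s2)
      have B2 : rle (e*(A*A*(B*B)*(mu*mu*qy)))
          (e*(((lam*A + mu*B)*(lam*A + mu*B))*(A*(B*G)))) := by
        have s1 : rle (e*((B*(B*(A*(mu*mu))))*(A*qy)))
            (e*((B*(B*(A*(mu*mu))))*(B*G))) := gmul e _ hS2.1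
        have s2 : rle (e*(mu*mu*(B*B)*(A*(B*G))))
            (e*(mu*mu*(B*B)*(A*(B*G))
              + (lam*lam*(A*A) + lam*mu*(A*B) + lam*mu*(A*B))*(A*(B*G)))) :=
          rle_left e hbip _ _
        exact rle_trans' (rle_congr' (by ring) (by ring) s1)
          (rle_congr' rfl (by ring) s2)
      have B3 : rle (e*(A*A*(B*B)*(lam*mu*G)))
          (e*(((lam*A + mu*B)*(lam*A + mu*B))*(A*(B*G)))) := by
        have habsmid : rle (e*((lam*mu*(A*B))*(lam*mu*(A*B))))
            (e*((lam*lam*(A*A) + mu*mu*(B*B))*(lam*lam*(A*A) + mu*mu*(B*B)))) := by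
          have s0 : rle (e*((lam*mu*(A*B))*(lam*mu*(A*B))))
              (e*((lam*mu*(A*B))*(lam*mu*(A*B))
                + ((lam*lam*(A*A))*(lam*lam*(A*A)) + (lam*lam*(A*A))*(mu*mu*(B*B))
                  + (mu*mu*(B*B))*(mu*mu*(B*B))))) := rle_left e hbip _ _
          exact rle_congr' rfl (by ring) s0
        have hmid : rle (e*(lam*mu*(A*B))) (e*(lam*lam*(A*A) + mu*mu*(B*B))) :=
          sq_rle e inv hbip hinv2 hzd habsmid
        have s3 : rle (e*((A*(B*G))*(lam*mu*(A*B))))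
            (e*((A*(B*G))*(lam*lam*(A*A) + mu*mu*(B*B)))) := gmul e _ hmid
        have s4 : rle (e*((lam*lam*(A*A) + mu*mu*(B*B))*(A*(B*G))))
            (e*((lam*lam*(A*A) + mu*mu*(B*B))*(A*(B*G))
              + (lam*mu*(A*B) + lam*mu*(A*B))*(A*(B*G)))) := rle_left e hbip _ _
        exact rle_trans' (rle_congr' (by ring) (by ring) s3)
          (rle_congr' rfl (by ring) s4)
      exact rle_add_out' (rle_add_out' B1 B2) B3
    have lhs_eq : e*(e*(A*B) * (e*(A*B)) * (qw*(lam*lam*qx + mu*mu*qy + lam*mu*G)))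
        = e*(qw*((A*A*(B*B))*(lam*lam*qx + mu*mu*qy + lam*mu*G))) := by
      calc e*(e*(A*B) * (e*(A*B)) * (qw*(lam*lam*qx + mu*mu*qy + lam*mu*G)))
          = e*(e*(e*(qw*((A*A*(B*B))*(lam*lam*qx + mu*mu*qy + lam*mu*G))))) := by ring
        _ = e*(qw*((A*A*(B*B))*(lam*lam*qx + mu*mu*qy + lam*mu*G))) := by
            rw [geabs, geabs]
    have rhs_eq : e*((lam*A + mu*B)*(lam*A + mu*B)*(qw * q m))
        = e*(qw*(((lam*A + mu*B)*(lam*A + mu*B))*(A*(B*G)))) := by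
      calc e*((lam*A + mu*B)*(lam*A + mu*B)*(qw * q m))
          = (((lam*A + mu*B)*(lam*A + mu*B))*qw)*(e * q m) := by ring
        _ = (((lam*A + mu*B)*(lam*A + mu*B))*qw)*(e*(A*B*G)) := by rw [hqmg]
        _ = e*(qw*(((lam*A + mu*B)*(lam*A + mu*B))*(A*(B*G)))) := by ring
    exact rle_congr' lhs_eq.symm rhs_eq.symm (gmul e qw core)
  · -- GOAL 5: uniqueness
    intro lam mu hz heq
    have hNz := hN lam mu
    have hQz := hQf lam mu
    have hQzne : q (lam • x + mu • y) ≠ 0 := fun h0 => hz (han _ h0)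
    by_cases hlam : lam = 0
    · exfalso
      have hmu : mu ≠ 0 := by
        intro h0; apply hz; rw [hlam, h0, zero_smul, zero_smul, add_zero]
      have hyz : e*(bf w (lam • x + mu • y) * bf w (lam • x + mu • y))
            *inv (qw * q (lam • x + mu • y))
          = e*(B*B)*inv (qw*qy) := by
        apply (crosseq e inv hinv2 (hmulne _ _ hqwne hQzne) hd4 _ _).mpr
        rw [hNz, hQz, hlam]
        ring
      exact hg3.2 (by rw [← heq, hyz])
    by_cases hmu : mu = 0
    · exfalso
      have hxz : e*(bf w (lam • x + mu • y) * bf w (lam • x + mu • y))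
            *inv (qw * q (lam • x + mu • y))
          = e*(A*A)*inv (qw*qx) := by
        apply (crosseq e inv hinv2 (hmulne _ _ hqwne hQzne) hd3 _ _).mpr
        rw [hNz, hQz, hmu]
        ring
      exact hg2.2 (by rw [← heq, hxz])
    -- main case
    have E0 := (crosseq e inv hinv2 (hmulne _ _ hqwne hQzne) hd1 _ _).mp heq
    rw [hNz, hbmf, hQz] at E0
    have E2 : e*(((lam*A + mu*B)*(lam*A + mu*B))*(A*(B*G)))
        = e*((A*A*(B*B))*(lam*lam*qx + mu*mu*qy + lam*mu*G)) := by
      apply cancel_eq e inv hinv2 hqwne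
      calc e*(qw*(((lam*A + mu*B)*(lam*A + mu*B))*(A*(B*G))))
          = (qw*((lam*A + mu*B)*(lam*A + mu*B)))*(e*(A*B*G)) := by ring
        _ = (qw*((lam*A + mu*B)*(lam*A + mu*B)))*(e * q m) := by rw [hqmg]
        _ = e*((lam*A + mu*B)*(lam*A + mu*B)*(qw * q m)) := by ring
        _ = e*(e*(A*B) * (e*(A*B)) * (qw*(lam*lam*qx + mu*mu*qy + lam*mu*G))) := E0
        _ = e*(e*(e*(qw*((A*A*(B*B))*(lam*lam*qx + mu*mu*qy + lam*mu*G))))) := by ring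
        _ = e*(qw*((A*A*(B*B))*(lam*lam*qx + mu*mu*qy + lam*mu*G))) := by
            rw [geabs, geabs]
    have hT1 : rlt (e*(A*A*(B*B)*(lam*lam*qx)))
        (e*(((lam*A + mu*B)*(lam*A + mu*B))*(A*(B*G)))) := by
      have s1 : rlt (e*((A*(A*(B*(lam*lam))))*(B*qx)))
          (e*((A*(A*(B*(lam*lam))))*(A*G))) :=
        gmul_rlt e inv hinv2
          (hmulne A _ hAne (hmulne A _ hAne (hmulne B _ hBne (hmulne lam lam hlam hlam))))
          hS1
      have s2 : rle (e*(lam*lam*(A*A)*(A*(B*G))))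
          (e*(lam*lam*(A*A)*(A*(B*G))
            + (lam*mu*(A*B) + lam*mu*(A*B) + mu*mu*(B*B))*(A*(B*G)))) :=
        rle_left e hbip _ _
      exact rlt_rle_trans' (rlt_congr' (by ring) (by ring) s1)
        (rle_congr' rfl (by ring) s2)
    have hT2 : rlt (e*(A*A*(B*B)*(mu*mu*qy)))
        (e*(((lam*A + mu*B)*(lam*A + mu*B))*(A*(B*G)))) := by
      have s1 : rlt (e*((B*(B*(A*(mu*mu))))*(A*qy)))
          (e*((B*(B*(A*(mu*mu))))*(B*G))) :=
        gmul_rlt e inv hinv2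
          (hmulne B _ hBne (hmulne B _ hBne (hmulne A _ hAne (hmulne mu mu hmu hmu))))
          hS2
      have s2 : rle (e*(mu*mu*(B*B)*(A*(B*G))))
          (e*(mu*mu*(B*B)*(A*(B*G))
            + (lam*lam*(A*A) + lam*mu*(A*B) + lam*mu*(A*B))*(A*(B*G)))) :=
        rle_left e hbip _ _
      exact rlt_rle_trans' (rlt_congr' (by ring) (by ring) s1)
        (rle_congr' rfl (by ring) s2)
    have hT1S := rlt_congr' rfl E2 hT1
    have hT2S := rlt_congr' rfl E2 hT2
    have hsplit : e*((A*A*(B*B))*(lam*lam*qx + mu*mu*qy + lam*mu*G))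
        = e*(A*A*(B*B)*(lam*lam*qx)) + e*(A*A*(B*B)*(mu*mu*qy))
          + e*(A*A*(B*B)*(lam*mu*G)) := by ring
    have hS_eq_T3 : e*((A*A*(B*B))*(lam*lam*qx + mu*mu*qy + lam*mu*G))
        = e*(A*A*(B*B)*(lam*mu*G)) := by
      rcases hbip (A*A*(B*B)*(lam*lam*qx)) (A*A*(B*B)*(mu*mu*qy)) with h12 | h12
      · rcases hbip (A*A*(B*B)*(lam*lam*qx)) (A*A*(B*B)*(lam*mu*G)) with h13 | h13
        · exact absurd (by rw [hsplit, h12, h13] :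
            e*((A*A*(B*B))*(lam*lam*qx + mu*mu*qy + lam*mu*G))
              = e*(A*A*(B*B)*(lam*lam*qx))).symm hT1S.2
        · rw [hsplit, h12, h13]
      · rcases hbip (A*A*(B*B)*(mu*mu*qy)) (A*A*(B*B)*(lam*mu*G)) with h23 | h23
        · exact absurd (by rw [hsplit, h12, h23] :
            e*((A*A*(B*B))*(lam*lam*qx + mu*mu*qy + lam*mu*G))
              = e*(A*A*(B*B)*(mu*mu*qy))).symm hT2S.2
        · rw [hsplit, h12, h23]
    have E3 := E2.trans hS_eq_T3
    have EN : e*((lam*A + mu*B)*(lam*A + mu*B)) = e*(lam*mu*(A*B)) := by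
      apply cancel_eq e inv hinv2 hABGne
      calc e*((A*(B*G))*((lam*A + mu*B)*(lam*A + mu*B)))
          = e*(((lam*A + mu*B)*(lam*A + mu*B))*(A*(B*G))) := by ring
        _ = e*(A*A*(B*B)*(lam*mu*G)) := E3
        _ = e*((A*(B*G))*(lam*mu*(A*B))) := by ring
    have hu_le : rle (e*(lam*lam*(A*A))) (e*(lam*mu*(A*B))) := by
      have s := rle_left e hbip (lam*lam*(A*A))
        (lam*mu*(A*B) + lam*mu*(A*B) + mu*mu*(B*B))
      exact rle_congr' rfl
        ((by ring : e*(lam*lam*(A*A) + (lam*mu*(A*B) + lam*mu*(A*B) + mu*mu*(B*B)))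
          = e*((lam*A + mu*B)*(lam*A + mu*B))).trans EN) s
    have hv_le : rle (e*(mu*mu*(B*B))) (e*(lam*mu*(A*B))) := by
      have s := rle_left e hbip (mu*mu*(B*B))
        (lam*lam*(A*A) + lam*mu*(A*B) + lam*mu*(A*B))
      exact rle_congr' rfl
        ((by ring : e*(mu*mu*(B*B) + (lam*lam*(A*A) + lam*mu*(A*B) + lam*mu*(A*B)))
          = e*((lam*A + mu*B)*(lam*A + mu*B))).trans EN) s
    have hlaA : lam*lam*(A*A) ≠ 0 :=
      hmulne _ _ (hmulne lam lam hlam hlam) (hmulne A A hAne hAne)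
    have hmuB : mu*mu*(B*B) ≠ 0 :=
      hmulne _ _ (hmulne mu mu hmu hmu) (hmulne B B hBne hBne)
    have huveq : e*(lam*lam*(A*A)) = e*(lam*mu*(A*B))
        ∧ e*(mu*mu*(B*B)) = e*(lam*mu*(A*B)) := by
      rcases gtotal e hbip (mu*mu*(B*B)) (lam*lam*(A*A)) with hvu | huv
      · have hg2' : rle (e*((lam*lam*(A*A))*(mu*mu*(B*B))))
            (e*((lam*lam*(A*A))*(lam*lam*(A*A)))) := gmul e _ hvu
        have hg_le_u : rle (e*(lam*mu*(A*B))) (e*(lam*lam*(A*A))) :=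
          sq_rle e inv hbip hinv2 hzd (rle_congr' (by ring) rfl hg2')
        have hu : e*(lam*lam*(A*A)) = e*(lam*mu*(A*B)) := rle_antisymm' hu_le hg_le_u
        refine ⟨hu, ?_⟩
        apply cancel_eq e inv hinv2 hlaA
        calc e*((lam*lam*(A*A))*(mu*mu*(B*B)))
            = e*((lam*mu*(A*B))*(lam*mu*(A*B))) := by ring
          _ = (lam*mu*(A*B))*(e*(lam*mu*(A*B))) := by ring
          _ = (lam*mu*(A*B))*(e*(lam*lam*(A*A))) := by rw [hu]
          _ = e*((lam*lam*(A*A))*(lam*mu*(A*B))) := by ring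
      · have hg2' : rle (e*((mu*mu*(B*B))*(lam*lam*(A*A))))
            (e*((mu*mu*(B*B))*(mu*mu*(B*B)))) := gmul e _ huv
        have hg_le_v : rle (e*(lam*mu*(A*B))) (e*(mu*mu*(B*B))) :=
          sq_rle e inv hbip hinv2 hzd (rle_congr' (by ring) rfl hg2')
        have hv : e*(mu*mu*(B*B)) = e*(lam*mu*(A*B)) := rle_antisymm' hv_le hg_le_v
        refine ⟨?_, hv⟩
        apply cancel_eq e inv hinv2 hmuB
        calc e*((mu*mu*(B*B))*(lam*lam*(A*A)))
            = e*((lam*mu*(A*B))*(lam*mu*(A*B))) := by ring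
          _ = (lam*mu*(A*B))*(e*(lam*mu*(A*B))) := by ring
          _ = (lam*mu*(A*B))*(e*(mu*mu*(B*B))) := by rw [hv]
          _ = e*((mu*mu*(B*B))*(lam*mu*(A*B))) := by ring
    have hkey : e*(lam*A) = e*(mu*B) := by
      apply sq_inj e inv hbip hinv2 hzd
      calc e*((lam*A)*(lam*A)) = e*(lam*lam*(A*A)) := by ring
        _ = e*(lam*mu*(A*B)) := huveq.1
        _ = e*(mu*mu*(B*B)) := huveq.2.symm
        _ = e*((mu*B)*(mu*B)) := by ring
    have hvec : (e*(A*B)) • (lam • x + mu • y) = (e*(lam*A)) • m := by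
      rw [hmv, smul_add, smul_add, smul_smul, smul_smul, smul_smul, smul_smul]
      have c1 : (e*(A*B))*lam = (e*(lam*A))*B := by ring
      have c2 : (e*(A*B))*mu = (e*(lam*A))*A := by
        calc (e*(A*B))*mu = (e*(mu*B))*A := by ring
          _ = (e*(lam*A))*A := by rw [hkey]
      rw [c1, c2]
    have hcne : e*(A*B) ≠ 0 := hmulne e _ he0 (hmulne A B hAne hBne)
    have hdne : e*(lam*A) ≠ 0 := hmulne e _ he0 (hmulne lam A hlam hAne)
    exact ray_eq_of_smul hzd hcne hdne hvec

end SupertropicalCS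
end
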